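/- arXiv:q-alg/9701007 — 4 statements merged into one kernel-verified Lean document; each statement's English description precedes it below -/
import Mathlib

section
/- Let N be a positive integer, L ∈ ℤ_{≥0}^N, ℓ = T^{-1}L, and a such that a + ℓ_N/2 ∈ ℤ_{≥0}. Then the coefficient of x^{a+ℓ_N/2} in the polynomial ∏_{j=1}^N (1+x+⋯+x^j)^{L_j} equals Σ_{j_1+⋯+j_N = a+ℓ_N/2, j_i∈ℤ_{≥0}} ∏_{k=1}^N C(L_k + j_{k+1}, j_k), where j_{N+1}=0 and C(·,·) denotes the ordinary binomial coefficient. -/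
/-! With `P k = 1 + x + ⋯ + x^k` one has `P (k + 1) = 1 + x * P k`, so the binomial expansion of the
top factor `P (k + 1) ^ L (k + 1)` writes `∏_{i ≤ k + 1} P i ^ L i` as
`∑_t C(L (k + 1), t) x^t (∏_{i ≤ k} P i ^ L i) * P k ^ t`: a product of the same shape with one
factor less and `L k` raised by `t`, which becomes the summation index `j_{k+1}`. Induction on the
number of factors, with `L` arbitrary, gives the binomial sum. -/

namespace Supernomial

open Finset Polynomial

variable {R : Type*} [CommSemiring R]

variable (R) in
noncomputable def geomPoly (k : ℕ) : R[X] := ∑ t ∈ range (k + 1), X ^ t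

lemma geomPoly_zero : geomPoly R 0 = 1 := by simp [geomPoly]

lemma geomPoly_succ (k : ℕ) : geomPoly R (k + 1) = X * geomPoly R k + 1 := geom_sum_succ

variable (R) in
noncomputable def prodGeomPoly (L : ℕ → ℕ) (k : ℕ) : R[X] := ∏ i ∈ Icc 1 k, geomPoly R i ^ L i

variable (R) in
/-- Elements of `piAntidiag (Icc 1 k) m` vanish at `k + 1`, which is the convention `j_{k+1} = 0`. -/
def binomialSum (L : ℕ → ℕ) (k m : ℕ) : R :=
  ∑ f ∈ (Icc 1 k).piAntidiag m, ∏ i ∈ Icc 1 k, ((L i + f (i + 1)).choose (f i) : R)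

lemma Icc_one_succ_eq_cons (k : ℕ) : Icc 1 (k + 1) = cons (k + 1) (Icc 1 k) (by simp) := by
  rw [cons_eq_insert, insert_Icc_right_eq_Icc_add_one (by omega)]

lemma prodGeomPoly_succ (L : ℕ → ℕ) (k : ℕ) :
    prodGeomPoly R L (k + 1) = geomPoly R (k + 1) ^ L (k + 1) * prodGeomPoly R L k := by
  rw [prodGeomPoly, Icc_one_succ_eq_cons, prod_cons, prodGeomPoly]

lemma prodGeomPoly_add_single (L : ℕ → ℕ) (k t : ℕ) :
    prodGeomPoly R (L + Pi.single k t) k = prodGeomPoly R L k * geomPoly R k ^ t := by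
  rcases Nat.eq_zero_or_pos k with rfl | hk
  · simp [prodGeomPoly, geomPoly_zero]
  · simp only [prodGeomPoly, Pi.add_apply, pow_add, prod_mul_distrib]
    congr 1
    rw [prod_eq_single_of_mem k (mem_Icc.2 ⟨hk, le_rfl⟩) fun i _ hik ↦ by simp [hik]]
    simp

lemma prodGeomPoly_succ_eq_sum (L : ℕ → ℕ) (k : ℕ) :
    prodGeomPoly R L (k + 1) = ∑ t ∈ range (L (k + 1) + 1),
      ((L (k + 1)).choose t : R[X]) * (X ^ t * prodGeomPoly R (L + Pi.single k t) k) := by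
  rw [prodGeomPoly_succ, geomPoly_succ, add_pow, sum_mul]
  refine sum_congr rfl fun t _ ↦ ?_
  rw [prodGeomPoly_add_single]
  ring

lemma coeff_prodGeomPoly_succ (L : ℕ → ℕ) (k m : ℕ) :
    (prodGeomPoly R L (k + 1)).coeff m = ∑ t ∈ range (m + 1),
      ((L (k + 1)).choose t : R) * (prodGeomPoly R (L + Pi.single k t) k).coeff (m - t) := by
  set F : ℕ → R := fun t ↦
    ((L (k + 1)).choose t : R) * (X ^ t * prodGeomPoly R (L + Pi.single k t) k).coeff m
  have hF : ∀ t ≥ min (L (k + 1)) m + 1, F t = 0 := fun t ht ↦ by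
    rcases le_or_gt t m with htm | htm
    · simp [F, Nat.choose_eq_zero_of_lt (show L (k + 1) < t by omega)]
    · simp [F, coeff_X_pow_mul', htm.not_ge]
  calc (prodGeomPoly R L (k + 1)).coeff m
      = ∑ t ∈ range (L (k + 1) + 1), F t := by
        rw [prodGeomPoly_succ_eq_sum, finsetSum_coeff]
        simp only [F, coeff_natCast_mul]
    _ = ∑ t ∈ range (m + 1), F t := by
        rw [eventually_constant_sum hF (by omega),
          eventually_constant_sum hF (n := m + 1) (by omega)]
    _ = _ := sum_congr rfl fun t ht ↦ by
        simp [F, coeff_X_pow_mul', Nat.le_of_lt_succ (mem_range.1 ht)]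

lemma binomialSum_zero (L : ℕ → ℕ) (m : ℕ) : binomialSum R L 0 m = if m = 0 then 1 else 0 := by
  rcases eq_or_ne m 0 with rfl | hm <;> simp [binomialSum, *]

lemma binomialSum_succ (L : ℕ → ℕ) (k m : ℕ) :
    binomialSum R L (k + 1) m = ∑ p ∈ antidiagonal m,
      ((L (k + 1)).choose p.1 : R) * binomialSum R (L + Pi.single k p.1) k p.2 := by
  rw [binomialSum, Icc_one_succ_eq_cons, piAntidiag_cons, sum_disjiUnion]
  refine sum_congr rfl fun p _ ↦ ?_
  rw [sum_map, binomialSum, mul_sum]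
  refine sum_congr rfl fun g hg ↦ ?_
  have hg_top : ∀ i, k < i → g i = 0 := fun i hi ↦ by
    by_contra h
    have := mem_Icc.1 ((mem_piAntidiag.1 hg).2 _ h)
    omega
  rw [prod_cons]
  congr 1
  · simp [hg_top (k + 1) (by omega), hg_top (k + 2) (by omega)]
  · refine prod_congr rfl fun i hi ↦ ?_
    have hik : i ≠ k + 1 := by simp at hi; omega
    rcases eq_or_ne i k with rfl | hik'
    · simp [hg_top (i + 1) (by omega)]
    · simp [hik, hik']

theorem coeff_prodGeomPoly (L : ℕ → ℕ) (k m : ℕ) :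
    (prodGeomPoly R L k).coeff m = binomialSum R L k m := by
  induction k generalizing L m with
  | zero => simp [prodGeomPoly, binomialSum_zero, coeff_one]
  | succ k ih =>
    rw [coeff_prodGeomPoly_succ, binomialSum_succ, Nat.sum_antidiagonal_eq_sum_range_succ_mk]
    simp only [ih]

lemma mem_piAntidiag_Icc_one_iff {N c : ℕ} {f : ℕ → ℕ} :
    f ∈ (Icc 1 N).piAntidiag c ↔ (∀ k, (k = 0 ∨ N < k) → f k = 0) ∧ ∑ k ∈ Icc 1 N, f k = c := by
  rw [mem_piAntidiag, and_comm]
  refine and_congr_left' ⟨fun h k hk ↦ ?_, fun h k hk ↦ ?_⟩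
  · by_contra hfk
    have := mem_Icc.1 (h k hfk)
    omega
  · by_contra hk'
    exact hk (h k (by simp at hk'; omega))

end Supernomial

theorem supernomial_eq_sum_of_binomials_general
    (N : ℕ) (L : ℕ → ℕ) (c : ℕ) :
    (∏ j ∈ Finset.Icc 1 N,
        (∑ t ∈ Finset.range (j + 1), (Polynomial.X : Polynomial ℚ) ^ t) ^ L j).coeff c
    = ∑' jj : {jj : ℕ → ℕ //
        (∀ k, (k = 0 ∨ N < k) → jj k = 0) ∧ ∑ k ∈ Finset.Icc 1 N, jj k = c},
        ∏ k ∈ Finset.Icc 1 N, (Nat.choose (L k + jj.1 (k + 1)) (jj.1 k) : ℚ) := by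
  rw [← (Equiv.subtypeEquivRight fun _ ↦ Supernomial.mem_piAntidiag_Icc_one_iff).tsum_eq]
  exact (Supernomial.coeff_prodGeomPoly L N c).trans (Finset.tsum_subtype _ _).symm

/-- For `N` positive, `L ∈ ℤ_{≥0}^N` (1-based, entries `L 1, …, L N`),
`ℓ = T⁻¹L` (so `ℓ_N = Σ_j min{N,j} L_j`), and `a` with `a + ℓ_N/2 = c ∈ ℤ_{≥0}`,
the coefficient of `x^c` in `∏_{j=1}^N (1+x+⋯+x^j)^{L_j}` equals
`Σ_{j_1+⋯+j_N=c} ∏_{k=1}^N C(L_k + j_{k+1}, j_k)` with `j_{N+1} = 0`. -/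
theorem supernomial_eq_sum_of_binomials
    (N : ℕ) (hN : 0 < N) (L : ℕ → ℕ) (a : ℚ) (c : ℕ)
    (hc : a + (∑ j ∈ Finset.Icc 1 N, (min N j : ℚ) * L j) / 2 = c) :
    (∏ j ∈ Finset.Icc 1 N,
        (∑ t ∈ Finset.range (j + 1), (Polynomial.X : Polynomial ℚ) ^ t) ^ L j).coeff c
    = ∑' jj : {jj : ℕ → ℕ //
        (∀ k, (k = 0 ∨ N < k) → jj k = 0) ∧ ∑ k ∈ Finset.Icc 1 N, jj k = c},
        ∏ k ∈ Finset.Icc 1 N, (Nat.choose (L k + jj.1 (k + 1)) (jj.1 k) : ℚ) :=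
  supernomial_eq_sum_of_binomials_general N L c
end

section
/- Let N be a positive integer and let X and Y be functions of L ∈ ℤ^N (with values in the field of rational functions of q) which both obey the recurrences X(L) = q^{ℓ_n − n} X(L − 2e_n) + X(L + e_{n−1} − 2e_n + e_{n+1}) for all 1 ≤ n ≤ N−1 and all L ∈ ℤ^N, where ℓ = T^{-1}L and e_0 = 0. If X(Le_1) = Y(Le_1) for all integers L ≥ 0, then X(L) = Y(L) for all L ∈ ℤ_{≥0}^N. -/
open scoped BigOperators

noncomputable section

/-- `(T⁻¹ L)_n` for `L ∈ ℤ^N` (components `L 0, …, L (N-1)` standing for `L_1, …, L_N`),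
with `n` a 1-based index: `ℓ_n = Σ_{j=1}^N min{n,j} L_j`. -/
def ellFin (N : ℕ) (L : Fin N → ℤ) (n : ℕ) : ℤ :=
  ∑ j : Fin N, (min n ((j : ℕ) + 1) : ℤ) * L j

/-- The 1-based unit vector `e_n ∈ ℤ^N`, with `e_0 = 0` (and `e_n = 0` for `n > N`). -/
def eFin (N : ℕ) (n : ℕ) : Fin N → ℤ := fun i => if (i : ℕ) + 1 = n then 1 else 0

end

lemma eFin_zero' (N : ℕ) (i : Fin N) : eFin N 0 i = 0 := by
  simp [eFin]

lemma ellFin_zero' (N : ℕ) (V : Fin N → ℤ) : ellFin N V 0 = 0 := by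
  unfold ellFin
  apply Finset.sum_eq_zero
  intro j _
  have : (min (0:ℕ) ((j:ℕ)+1) : ℤ) = 0 := by omega
  rw [this, zero_mul]

lemma sum_mul_eFin (N : ℕ) (f : Fin N → ℤ) (k : ℕ) (hk : k ≤ N) (hk0 : 1 ≤ k) :
    ∑ j : Fin N, f j * eFin N k j = f ⟨k - 1, by omega⟩ := by
  rw [Finset.sum_eq_single (⟨k - 1, by omega⟩ : Fin N)]
  · simp [eFin]; omega
  · intro j _ hj
    have : (j : ℕ) + 1 ≠ k := by
      intro h; apply hj; apply Fin.ext; simp; omega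
    simp [eFin, this]
  · intro h; exact absurd (Finset.mem_univ _) h

lemma ellFin_e (N : ℕ) (k n : ℕ) (hk : k ≤ N) :
    ∑ j : Fin N, (min n ((j : ℕ) + 1) : ℤ) * eFin N k j = (min n k : ℤ) := by
  rcases Nat.eq_zero_or_pos k with h | h
  · subst h; simp [eFin]
  · rw [sum_mul_eFin N _ k hk h]
    have h2 : ((⟨k - 1, by omega⟩ : Fin N) : ℕ) = k - 1 := rfl
    rw [h2]; omega

lemma psi_e (N : ℕ) (k : ℕ) (hk : k ≤ N) :
    ∑ j : Fin N, (5:ℤ)^((j:ℕ)+1) * eFin N k j = if k = 0 then 0 else 5 ^ k := by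
  rcases Nat.eq_zero_or_pos k with h | h
  · subst h; simp [eFin]
  · rw [sum_mul_eFin N _ k hk h, if_neg (by omega)]
    have h2 : ((⟨k - 1, by omega⟩ : Fin N) : ℕ) = k - 1 := rfl
    rw [h2]; congr 1; omega

lemma ellFin_comb (N : ℕ) (V : Fin N → ℤ) (c1 c2 c3 c4 : ℤ) (k1 k2 k3 k4 n : ℕ)
    (h1 : k1 ≤ N) (h2 : k2 ≤ N) (h3 : k3 ≤ N) (h4 : k4 ≤ N) :
    ellFin N (fun i => V i + c1 * eFin N k1 i + c2 * eFin N k2 i + c3 * eFin N k3 i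
        + c4 * eFin N k4 i) n
      = ellFin N V n + c1 * (min n k1 : ℤ) + c2 * (min n k2 : ℤ) + c3 * (min n k3 : ℤ)
        + c4 * (min n k4 : ℤ) := by
  have key : ∀ (c : ℤ) (k : ℕ), k ≤ N →
      ∑ j : Fin N, (min n ((j:ℕ)+1) : ℤ) * (c * eFin N k j) = c * (min n k : ℤ) := by
    intro c k hk
    rw [← ellFin_e N k n hk, Finset.mul_sum]
    exact Finset.sum_congr rfl fun j _ => by ring
  simp only [ellFin, mul_add, Finset.sum_add_distrib]
  rw [key c1 k1 h1, key c2 k2 h2, key c3 k3 h3, key c4 k4 h4]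

lemma psi_comb (N : ℕ) (V : Fin N → ℤ) (c1 c2 c3 c4 : ℤ) (k1 k2 k3 k4 : ℕ)
    (h1 : k1 ≤ N) (h2 : k2 ≤ N) (h3 : k3 ≤ N) (h4 : k4 ≤ N) :
    ∑ i : Fin N, (5:ℤ)^((i:ℕ)+1) * (V i + c1 * eFin N k1 i + c2 * eFin N k2 i
        + c3 * eFin N k3 i + c4 * eFin N k4 i)
      = (∑ i : Fin N, (5:ℤ)^((i:ℕ)+1) * V i)
        + c1 * (if k1 = 0 then 0 else 5 ^ k1) + c2 * (if k2 = 0 then 0 else 5 ^ k2)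
        + c3 * (if k3 = 0 then 0 else 5 ^ k3) + c4 * (if k4 = 0 then 0 else 5 ^ k4) := by
  have key : ∀ (c : ℤ) (k : ℕ), k ≤ N →
      ∑ j : Fin N, (5:ℤ)^((j:ℕ)+1) * (c * eFin N k j)
        = c * (if k = 0 then 0 else 5 ^ k) := by
    intro c k hk
    rw [← psi_e N k hk, Finset.mul_sum]
    exact Finset.sum_congr rfl fun j _ => by ring
  simp only [mul_add, Finset.sum_add_distrib]
  rw [key c1 k1 h1, key c2 k2 h2, key c3 k3 h3, key c4 k4 h4]

lemma ellFin_concave (N m : ℕ) (B : Fin N → ℤ) (hm3 : 3 ≤ m)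
    (hB : ∀ i : Fin N, (i:ℕ)+1 = m-2 → B i = 0) :
    2 * ellFin N B (m-2) = ellFin N B (m-1) + ellFin N B (m-3) := by
  simp only [ellFin, Finset.mul_sum, ← Finset.sum_add_distrib]
  apply Finset.sum_congr rfl
  intro j _
  by_cases hj : (j:ℕ)+1 = m-2
  · rw [hB j hj]; ring
  · have hco : 2 * (min (↑(m-2)) ((↑(j:ℕ)+1)) : ℤ)
        = (min (↑(m-1)) ((↑(j:ℕ)+1)) : ℤ) + (min (↑(m-3)) ((↑(j:ℕ)+1)) : ℤ) := by
      omega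
    rw [show (2:ℤ) * ((min (↑(m-2)) ((↑(j:ℕ)+1)) : ℤ) * B j)
        = (2 * (min (↑(m-2)) ((↑(j:ℕ)+1)) : ℤ)) * B j from by ring, hco, add_mul]
/-- if `X, Y : ℤ^N → ℚ(q)` both satisfy the recurrences
`X(L) = q^{ℓ_n-n} X(L-2e_n) + X(L+e_{n-1}-2e_n+e_{n+1})` for all `1 ≤ n ≤ N-1` and all
`L ∈ ℤ^N`, and agree on `L e_1` for all `L ≥ 0`, then they agree on all of `ℤ_{≥0}^N`. -/
theorem recurrence_determines (N : ℕ) (hN : 0 < N)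
    (X Y : (Fin N → ℤ) → RatFunc ℚ)
    (hX : ∀ n : ℕ, 1 ≤ n → n ≤ N - 1 → ∀ L : Fin N → ℤ,
      X L = (RatFunc.X : RatFunc ℚ) ^ (ellFin N L n - n) *
              X (fun i => L i - 2 * eFin N n i)
            + X (fun i => L i + eFin N (n - 1) i - 2 * eFin N n i + eFin N (n + 1) i))
    (hY : ∀ n : ℕ, 1 ≤ n → n ≤ N - 1 → ∀ L : Fin N → ℤ,
      Y L = (RatFunc.X : RatFunc ℚ) ^ (ellFin N L n - n) *
              Y (fun i => L i - 2 * eFin N n i)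
            + Y (fun i => L i + eFin N (n - 1) i - 2 * eFin N n i + eFin N (n + 1) i))
    (hinit : ∀ l : ℕ, X (fun i => if (i : ℕ) = 0 then (l : ℤ) else 0)
                    = Y (fun i => if (i : ℕ) = 0 then (l : ℤ) else 0)) :
    ∀ L : Fin N → ℤ, (∀ i, 0 ≤ L i) → X L = Y L := by
  have hq : (RatFunc.X : RatFunc ℚ) ≠ 0 := RatFunc.X_ne_zero
  set Z : (Fin N → ℤ) → RatFunc ℚ := fun L => X L - Y L with hZdef
  have hZ : ∀ n : ℕ, 1 ≤ n → n ≤ N - 1 → ∀ L : Fin N → ℤ,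
      Z L = (RatFunc.X : RatFunc ℚ) ^ (ellFin N L n - n) *
              Z (fun i => L i - 2 * eFin N n i)
            + Z (fun i => L i + eFin N (n - 1) i - 2 * eFin N n i + eFin N (n + 1) i) := by
    intro n h1 h2 L
    simp only [hZdef]
    rw [hX n h1 h2 L, hY n h1 h2 L]; ring
  have hZray : ∀ l : ℕ, Z (fun i => if (i : ℕ) = 0 then (l : ℤ) else 0) = 0 := by
    intro l; simp only [hZdef]; rw [hinit l, sub_self]
  suffices key : ∀ (k : ℕ) (L : Fin N → ℤ), (∀ i, 0 ≤ L i) →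
      (∑ i : Fin N, (5:ℤ)^((i:ℕ)+1) * L i) < (k:ℤ) → Z L = 0 by
    intro L hL
    have h0 : (0:ℤ) ≤ ∑ i : Fin N, (5:ℤ)^((i:ℕ)+1) * L i :=
      Finset.sum_nonneg fun i _ => mul_nonneg (by positivity) (hL i)
    have hz := key ((∑ i : Fin N, (5:ℤ)^((i:ℕ)+1) * L i).toNat + 1) L hL (by
      rw [Nat.cast_add, Nat.cast_one, Int.toNat_of_nonneg h0]; exact lt_add_one _)
    have hxy : X L - Y L = 0 := hz
    exact sub_eq_zero.mp hxy
  intro k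
  induction k with
  | zero =>
    intro L hL hlt
    exact absurd hlt (not_lt.mpr (by
      exact_mod_cast Finset.sum_nonneg fun i _ => mul_nonneg (by positivity) (hL i)))
  | succ k IH =>
    intro L hL hlt
    by_cases hray : ∀ i : Fin N, 1 ≤ (i:ℕ) → L i = 0
    · -- base ray case
      have hL0 : L = fun i : Fin N => if (i : ℕ) = 0 then (((L ⟨0, hN⟩).toNat : ℕ) : ℤ) else 0 := by
        funext i
        by_cases hi : (i:ℕ) = 0
        · have hii : i = ⟨0, hN⟩ := Fin.ext hi
          rw [if_pos hi, hii, Int.toNat_of_nonneg (hL _)]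
        · rw [if_neg hi]; exact hray i (by omega)
      rw [hL0]; exact hZray _
    · -- main case
      push_neg at hray
      obtain ⟨iw, hiw1, hiw2⟩ := hray
      have hiwpos : 1 ≤ L iw := by have := hL iw; omega
      set S : Finset (Fin N) := Finset.univ.filter (fun i => 1 ≤ (i:ℕ) ∧ 1 ≤ L i) with hS
      have hSne : S.Nonempty := ⟨iw, by simp [hS]; exact ⟨hiw1, hiwpos⟩⟩
      set i₀ := S.max' hSne with hi₀
      have hi₀S : i₀ ∈ S := S.max'_mem hSne
      have hi₀S' : 1 ≤ (i₀:ℕ) ∧ 1 ≤ L i₀ := by simpa [hS] using hi₀S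
      set m := (i₀:ℕ) + 1 with hm
      have hm2 : 2 ≤ m := by omega
      have hmN : m ≤ N := by have := i₀.isLt; omega
      have hLm : ∀ i : Fin N, (i:ℕ)+1 = m → 1 ≤ L i := by
        intro i hi
        have : i = i₀ := Fin.ext (by omega)
        rw [this]; exact hi₀S'.2
      have htop : ∀ j : Fin N, m ≤ (j:ℕ) → L j = 0 := by
        intro j hj
        by_contra hcj
        have h1 : 1 ≤ L j := by have := hL j; omega
        have hjS : j ∈ S := by simp [hS]; exact ⟨by omega, h1⟩
        have := Fin.le_def.mp (S.le_max' j hjS)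
        omega
      have hIH : ∀ Q : Fin N → ℤ, (∀ i, 0 ≤ Q i) →
          (∑ i : Fin N, (5:ℤ)^((i:ℕ)+1) * Q i) < (∑ i : Fin N, (5:ℤ)^((i:ℕ)+1) * L i) →
          Z Q = 0 := by
        intro Q h1 h2
        apply IH Q h1
        push_cast at hlt ⊢
        linarith
      -- power facts
      have hpm : (5:ℤ)^m = 5 * 5^(m-1) := by
        calc (5:ℤ)^m = 5^((m-1)+1) := by rw [show (m-1)+1 = m from by omega]
        _ = 5 * 5^(m-1) := by rw [pow_succ]; ring
      have hple1 : (5:ℤ)^(m-2) ≤ 5^(m-1) := pow_le_pow_right₀ (by norm_num) (by omega)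
      have hple2 : (5:ℤ)^(m-3) ≤ 5^(m-1) := pow_le_pow_right₀ (by norm_num) (by omega)
      have hple3 : (5:ℤ)^(m-4) ≤ 5^(m-1) := pow_le_pow_right₀ (by norm_num) (by omega)
      have hppos : (0:ℤ) < 5^(m-1) := by positivity
      have hif : ∀ j : ℕ, 0 ≤ (if j = 0 then (0:ℤ) else 5^j) ∧
          (if j = 0 then (0:ℤ) else 5^j) ≤ 5^j := by
        intro j
        constructor
        · split_ifs
          · exact le_refl 0
          · positivity
        · split_ifs
          · positivity
          · exact le_rfl
      -- canonical points and the main relation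
      set P1 : Fin N → ℤ := fun i => L i - eFin N (m) i - eFin N (m-2) i + 2 * eFin N (m-1) i with hP1
      set P2 : Fin N → ℤ := fun i => L i - eFin N (m) i - eFin N (m-2) i with hP2
      have main_rel := hZ (m-1) (by omega) (by omega) P1
      rw [show m - 1 - 1 = m - 2 from by omega, show m - 1 + 1 = m from by omega] at main_rel
      rw [show (fun i => P1 i - 2 * eFin N (m-1) i) = P2 from funext fun i => by
            simp only [hP1, hP2]; ring] at main_rel
      rw [show (fun i => P1 i + eFin N (m-2) i - 2 * eFin N (m-1) i + eFin N m i) = L from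
            funext fun i => by simp only [hP1]; ring] at main_rel
      by_cases hc : ∀ i : Fin N, (i:ℕ)+1 = m-2 → 1 ≤ L i
      · -- direct case
        have hpsP1 : (∑ i : Fin N, (5:ℤ)^((i:ℕ)+1) * P1 i)
            < (∑ i : Fin N, (5:ℤ)^((i:ℕ)+1) * L i) := by
          have heq : (∑ i : Fin N, (5:ℤ)^((i:ℕ)+1) * P1 i)
              = (∑ i : Fin N, (5:ℤ)^((i:ℕ)+1) * L i) + (-1) * (if (m) = 0 then (0:ℤ) else 5^(m)) + (-1) * (if (m-2) = 0 then (0:ℤ) else 5^(m-2)) + (2) * (if (m-1) = 0 then (0:ℤ) else 5^(m-1)) + (0) * (if (0) = 0 then (0:ℤ) else 5^(0)) := by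
            rw [← psi_comb N L (-1) (-1) (2) (0) (m) (m-2) (m-1) (0) (by omega) (by omega) (by omega) (by omega)]
            exact Finset.sum_congr rfl fun i _ => by simp only [hP1]; ring
          rw [heq, if_neg (show ¬ (m = 0) from by omega)]
          have hi1 := hif (m-1); have hi2 := hif (m-2)
          have hi3 := hif (m-3); have hi4 := hif (m-4)
          linarith
        have hoP1 : ∀ i, 0 ≤ P1 i := by
          intro i
          have h0 := hL i
          simp only [hP1, eFin]
          by_cases him : (i:ℕ)+1 = m
          · have h1 := hLm i him
            split_ifs <;> omega
          · by_cases hvm : (i:ℕ)+1 = m-2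
            · have h2 := hc i hvm
              split_ifs <;> omega
            · split_ifs <;> omega
        have hpsP2 : (∑ i : Fin N, (5:ℤ)^((i:ℕ)+1) * P2 i)
            < (∑ i : Fin N, (5:ℤ)^((i:ℕ)+1) * L i) := by
          have heq : (∑ i : Fin N, (5:ℤ)^((i:ℕ)+1) * P2 i)
              = (∑ i : Fin N, (5:ℤ)^((i:ℕ)+1) * L i) + (-1) * (if (m) = 0 then (0:ℤ) else 5^(m)) + (-1) * (if (m-2) = 0 then (0:ℤ) else 5^(m-2)) + (0) * (if (0) = 0 then (0:ℤ) else 5^(0)) + (0) * (if (0) = 0 then (0:ℤ) else 5^(0)) := by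
            rw [← psi_comb N L (-1) (-1) (0) (0) (m) (m-2) (0) (0) (by omega) (by omega) (by omega) (by omega)]
            exact Finset.sum_congr rfl fun i _ => by simp only [hP2]; ring
          rw [heq, if_neg (show ¬ (m = 0) from by omega)]
          have hi1 := hif (m-1); have hi2 := hif (m-2)
          have hi3 := hif (m-3); have hi4 := hif (m-4)
          linarith
        have hoP2 : ∀ i, 0 ≤ P2 i := by
          intro i
          have h0 := hL i
          simp only [hP2, eFin]
          by_cases him : (i:ℕ)+1 = m
          · have h1 := hLm i him
            split_ifs <;> omega
          · by_cases hvm : (i:ℕ)+1 = m-2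
            · have h2 := hc i hvm
              split_ifs <;> omega
            · split_ifs <;> omega
        have z1 : Z P1 = 0 := hIH P1 hoP1 hpsP1
        have z2 : Z P2 = 0 := hIH P2 hoP2 hpsP2
        rw [z1, z2] at main_rel
        simpa using main_rel.symm
      · -- cancellation case
        push_neg at hc
        obtain ⟨iv, hiv1, hiv2⟩ := hc
        have hm3 : 3 ≤ m := by omega
        have hv0 : ∀ i : Fin N, (i:ℕ)+1 = m-2 → L i = 0 := by
          intro i hi
          have hieq : i = iv := Fin.ext (by omega)
          rw [hieq]; have := hL iv; omega
        -- the chain lemma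
        have chain : ∀ B : Fin N → ℤ,
            (∀ i : Fin N, (i:ℕ)+1 = m-2 → B i = 0) →
            Z (fun i => B i - eFin N (m-3) i + eFin N (m-1) i + eFin N (m-2) i) = 0 →
            Z (fun i => B i - 2 * eFin N (m-3) i + eFin N (m-2) i) = 0 →
            (4 ≤ m → Z (fun i => B i - 2 * eFin N (m-3) i + eFin N (m-4) i) = 0) →
            Z (fun i => B i - eFin N (m-2) i + 2 * eFin N (m-1) i)
              = (RatFunc.X : RatFunc ℚ) ^
                  (ellFin N (fun i => B i - eFin N (m-2) i + 2 * eFin N (m-1) i) (m-1)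
                    - ((m-1 : ℕ) : ℤ))
                * Z (fun i => B i - eFin N (m-2) i) := by
          intro B hB2 hz1 hz2 hz3
          set A1 : Fin N → ℤ := fun i => B i - eFin N (m-3) i + eFin N (m-1) i + eFin N (m-2) i with hA1
          set A2 : Fin N → ℤ := fun i => B i - 2 * eFin N (m-3) i + eFin N (m-2) i with hA2
          set A3 : Fin N → ℤ := fun i => B i - 2 * eFin N (m-3) i + eFin N (m-4) i with hA3
          set T : Fin N → ℤ := fun i => B i - eFin N (m-2) i + 2 * eFin N (m-1) i with hT
          set G0 : Fin N → ℤ := fun i => B i - eFin N (m-2) i with hG0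
          set G1 : Fin N → ℤ := fun i => B i - eFin N (m-3) i + eFin N (m-1) i - eFin N (m-2) i with hG1
          set G2 : Fin N → ℤ := fun i => B i - 2 * eFin N (m-3) i - eFin N (m-2) i with hG2
          have hr1 := hZ (m-2) (by omega) (by omega) A1
          rw [show m-2-1 = m-3 from by omega, show m-2+1 = m-1 from by omega] at hr1
          rw [hz1] at hr1
          rw [show (fun i => A1 i - 2 * eFin N (m-2) i) = G1 from funext fun i => by
                simp only [hA1, hG1]; ring] at hr1
          rw [show (fun i => A1 i + eFin N (m-3) i - 2 * eFin N (m-2) i + eFin N (m-1) i) = T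
              from funext fun i => by simp only [hA1, hT]; ring] at hr1
          have hr2 := hZ (m-2) (by omega) (by omega) A2
          rw [show m-2-1 = m-3 from by omega, show m-2+1 = m-1 from by omega] at hr2
          rw [hz2] at hr2
          rw [show (fun i => A2 i - 2 * eFin N (m-2) i) = G2 from funext fun i => by
                simp only [hA2, hG2]; ring] at hr2
          rw [show (fun i => A2 i + eFin N (m-3) i - 2 * eFin N (m-2) i + eFin N (m-1) i) = G1
              from funext fun i => by simp only [hA2, hG1]; ring] at hr2
          have hr3 : Z G0 = (RatFunc.X : RatFunc ℚ) ^ (ellFin N G0 (m-3) - ((m-3:ℕ):ℤ)) * Z G2 := by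
            by_cases h4 : 4 ≤ m
            · have hr := hZ (m-3) (by omega) (by omega) G0
              rw [show m-3-1 = m-4 from by omega, show m-3+1 = m-2 from by omega] at hr
              rw [show (fun i => G0 i - 2 * eFin N (m-3) i) = G2 from funext fun i => by
                    simp only [hG0, hG2]; ring] at hr
              rw [show (fun i => G0 i + eFin N (m-4) i - 2 * eFin N (m-3) i + eFin N (m-2) i) = A3
                  from funext fun i => by simp only [hG0, hA3]; ring] at hr
              rw [hz3 h4] at hr
              simpa using hr
            · have hG2G0 : G2 = G0 := funext fun i => by
                simp only [hG2, hG0, show m-3 = 0 from by omega, eFin_zero']; ring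
              have he2 : ellFin N G0 (m-3) - ((m-3:ℕ):ℤ) = 0 := by
                rw [show m-3 = 0 from by omega, ellFin_zero']; simp
              rw [hG2G0, he2, zpow_zero, one_mul]
          have hcomb1 := ellFin_comb N B (-1) (1) (1) (0) (m-3) (m-1) (m-2) (0) (m-2) (by omega) (by omega) (by omega) (by omega)
          rw [show (fun i => B i + (-1) * eFin N (m-3) i + (1) * eFin N (m-1) i + (1) * eFin N (m-2) i + (0) * eFin N (0) i) = A1 from funext fun i => by simp only [hA1]; ring] at hcomb1
          have hcomb2 := ellFin_comb N B (-2) (1) (0) (0) (m-3) (m-2) (0) (0) (m-2) (by omega) (by omega) (by omega) (by omega)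
          rw [show (fun i => B i + (-2) * eFin N (m-3) i + (1) * eFin N (m-2) i + (0) * eFin N (0) i + (0) * eFin N (0) i) = A2 from funext fun i => by simp only [hA2]; ring] at hcomb2
          have hcomb3 := ellFin_comb N B (-1) (2) (0) (0) (m-2) (m-1) (0) (0) (m-1) (by omega) (by omega) (by omega) (by omega)
          rw [show (fun i => B i + (-1) * eFin N (m-2) i + (2) * eFin N (m-1) i + (0) * eFin N (0) i + (0) * eFin N (0) i) = T from funext fun i => by simp only [hT]; ring] at hcomb3
          have hcomb4 := ellFin_comb N B (-1) (0) (0) (0) (m-2) (0) (0) (0) (m-3) (by omega) (by omega) (by omega) (by omega)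
          rw [show (fun i => B i + (-1) * eFin N (m-2) i + (0) * eFin N (0) i + (0) * eFin N (0) i + (0) * eFin N (0) i) = G0 from funext fun i => by simp only [hG0]; ring] at hcomb4
          have hconc := ellFin_concave N m B hm3 hB2
          have hexp : (ellFin N A1 (m-2) - ((m-2:ℕ):ℤ)) + (ellFin N A2 (m-2) - ((m-2:ℕ):ℤ))
              = (ellFin N T (m-1) - ((m-1:ℕ):ℤ)) + (ellFin N G0 (m-3) - ((m-3:ℕ):ℤ)) := by
            omega
          calc Z T = -((RatFunc.X : RatFunc ℚ) ^ (ellFin N A1 (m-2) - ((m-2:ℕ):ℤ)) * Z G1) := by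
                linear_combination (-1 : RatFunc ℚ) * hr1
          _ = (RatFunc.X : RatFunc ℚ) ^ (ellFin N A1 (m-2) - ((m-2:ℕ):ℤ)) *
              ((RatFunc.X : RatFunc ℚ) ^ (ellFin N A2 (m-2) - ((m-2:ℕ):ℤ)) * Z G2) := by
                linear_combination ((RatFunc.X : RatFunc ℚ) ^ (ellFin N A1 (m-2) - ((m-2:ℕ):ℤ))) * hr2
          _ = (RatFunc.X : RatFunc ℚ) ^ ((ellFin N A1 (m-2) - ((m-2:ℕ):ℤ)) + (ellFin N A2 (m-2) - ((m-2:ℕ):ℤ))) * Z G2 := by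
                rw [zpow_add₀ hq]; ring
          _ = (RatFunc.X : RatFunc ℚ) ^ ((ellFin N T (m-1) - ((m-1:ℕ):ℤ)) + (ellFin N G0 (m-3) - ((m-3:ℕ):ℤ))) * Z G2 := by
                rw [hexp]
          _ = (RatFunc.X : RatFunc ℚ) ^ (ellFin N T (m-1) - ((m-1:ℕ):ℤ)) * Z G0 := by
                rw [zpow_add₀ hq, hr3]; ring
        set Qa : Fin N → ℤ := fun i => L i - eFin N (m) i + eFin N (m-3) i + eFin N (m-1) i + eFin N (m-2) i with hQa
        set Qb : Fin N → ℤ := fun i => L i - eFin N (m) i + eFin N (m-2) i with hQb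
        set Qc : Fin N → ℤ := fun i => L i - eFin N (m) i + eFin N (m-4) i with hQc
        set Qd : Fin N → ℤ := fun i => L i - eFin N (m) i + 2 * eFin N (m-1) i + eFin N (m-4) i with hQd
        set A4 : Fin N → ℤ := fun i => L i - eFin N (m) i - eFin N (m-2) i + 2 * eFin N (m-3) i with hA4
        set A5 : Fin N → ℤ := fun i => L i - eFin N (m) i - eFin N (m-2) i + 2 * eFin N (m-1) i + 2 * eFin N (m-3) i with hA5
        set B2 : Fin N → ℤ := fun i => L i - eFin N m i + 2 * eFin N (m-3) i with hB2v
        have hpsQa : (∑ i : Fin N, (5:ℤ)^((i:ℕ)+1) * Qa i)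
            < (∑ i : Fin N, (5:ℤ)^((i:ℕ)+1) * L i) := by
          have heq : (∑ i : Fin N, (5:ℤ)^((i:ℕ)+1) * Qa i)
              = (∑ i : Fin N, (5:ℤ)^((i:ℕ)+1) * L i) + (-1) * (if (m) = 0 then (0:ℤ) else 5^(m)) + (1) * (if (m-3) = 0 then (0:ℤ) else 5^(m-3)) + (1) * (if (m-1) = 0 then (0:ℤ) else 5^(m-1)) + (1) * (if (m-2) = 0 then (0:ℤ) else 5^(m-2)) := by
            rw [← psi_comb N L (-1) (1) (1) (1) (m) (m-3) (m-1) (m-2) (by omega) (by omega) (by omega) (by omega)]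
            exact Finset.sum_congr rfl fun i _ => by simp only [hQa]; ring
          rw [heq, if_neg (show ¬ (m = 0) from by omega)]
          have hi1 := hif (m-1); have hi2 := hif (m-2)
          have hi3 := hif (m-3); have hi4 := hif (m-4)
          linarith
        have hoQa : ∀ i, 0 ≤ Qa i := by
          intro i
          have h0 := hL i
          simp only [hQa, eFin]
          by_cases him : (i:ℕ)+1 = m
          · have h1 := hLm i him
            split_ifs <;> omega
          · split_ifs <;> omega
        have zQa : Z Qa = 0 := hIH Qa hoQa hpsQa
        have hpsQb : (∑ i : Fin N, (5:ℤ)^((i:ℕ)+1) * Qb i)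
            < (∑ i : Fin N, (5:ℤ)^((i:ℕ)+1) * L i) := by
          have heq : (∑ i : Fin N, (5:ℤ)^((i:ℕ)+1) * Qb i)
              = (∑ i : Fin N, (5:ℤ)^((i:ℕ)+1) * L i) + (-1) * (if (m) = 0 then (0:ℤ) else 5^(m)) + (1) * (if (m-2) = 0 then (0:ℤ) else 5^(m-2)) + (0) * (if (0) = 0 then (0:ℤ) else 5^(0)) + (0) * (if (0) = 0 then (0:ℤ) else 5^(0)) := by
            rw [← psi_comb N L (-1) (1) (0) (0) (m) (m-2) (0) (0) (by omega) (by omega) (by omega) (by omega)]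
            exact Finset.sum_congr rfl fun i _ => by simp only [hQb]; ring
          rw [heq, if_neg (show ¬ (m = 0) from by omega)]
          have hi1 := hif (m-1); have hi2 := hif (m-2)
          have hi3 := hif (m-3); have hi4 := hif (m-4)
          linarith
        have hoQb : ∀ i, 0 ≤ Qb i := by
          intro i
          have h0 := hL i
          simp only [hQb, eFin]
          by_cases him : (i:ℕ)+1 = m
          · have h1 := hLm i him
            split_ifs <;> omega
          · split_ifs <;> omega
        have zQb : Z Qb = 0 := hIH Qb hoQb hpsQb
        have hpsQc : (∑ i : Fin N, (5:ℤ)^((i:ℕ)+1) * Qc i)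
            < (∑ i : Fin N, (5:ℤ)^((i:ℕ)+1) * L i) := by
          have heq : (∑ i : Fin N, (5:ℤ)^((i:ℕ)+1) * Qc i)
              = (∑ i : Fin N, (5:ℤ)^((i:ℕ)+1) * L i) + (-1) * (if (m) = 0 then (0:ℤ) else 5^(m)) + (1) * (if (m-4) = 0 then (0:ℤ) else 5^(m-4)) + (0) * (if (0) = 0 then (0:ℤ) else 5^(0)) + (0) * (if (0) = 0 then (0:ℤ) else 5^(0)) := by
            rw [← psi_comb N L (-1) (1) (0) (0) (m) (m-4) (0) (0) (by omega) (by omega) (by omega) (by omega)]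
            exact Finset.sum_congr rfl fun i _ => by simp only [hQc]; ring
          rw [heq, if_neg (show ¬ (m = 0) from by omega)]
          have hi1 := hif (m-1); have hi2 := hif (m-2)
          have hi3 := hif (m-3); have hi4 := hif (m-4)
          linarith
        have hoQc : ∀ i, 0 ≤ Qc i := by
          intro i
          have h0 := hL i
          simp only [hQc, eFin]
          by_cases him : (i:ℕ)+1 = m
          · have h1 := hLm i him
            split_ifs <;> omega
          · split_ifs <;> omega
        have zQc : Z Qc = 0 := hIH Qc hoQc hpsQc
        have hpsQd : (∑ i : Fin N, (5:ℤ)^((i:ℕ)+1) * Qd i)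
            < (∑ i : Fin N, (5:ℤ)^((i:ℕ)+1) * L i) := by
          have heq : (∑ i : Fin N, (5:ℤ)^((i:ℕ)+1) * Qd i)
              = (∑ i : Fin N, (5:ℤ)^((i:ℕ)+1) * L i) + (-1) * (if (m) = 0 then (0:ℤ) else 5^(m)) + (2) * (if (m-1) = 0 then (0:ℤ) else 5^(m-1)) + (1) * (if (m-4) = 0 then (0:ℤ) else 5^(m-4)) + (0) * (if (0) = 0 then (0:ℤ) else 5^(0)) := by
            rw [← psi_comb N L (-1) (2) (1) (0) (m) (m-1) (m-4) (0) (by omega) (by omega) (by omega) (by omega)]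
            exact Finset.sum_congr rfl fun i _ => by simp only [hQd]; ring
          rw [heq, if_neg (show ¬ (m = 0) from by omega)]
          have hi1 := hif (m-1); have hi2 := hif (m-2)
          have hi3 := hif (m-3); have hi4 := hif (m-4)
          linarith
        have hoQd : ∀ i, 0 ≤ Qd i := by
          intro i
          have h0 := hL i
          simp only [hQd, eFin]
          by_cases him : (i:ℕ)+1 = m
          · have h1 := hLm i him
            split_ifs <;> omega
          · split_ifs <;> omega
        have zQd : Z Qd = 0 := hIH Qd hoQd hpsQd
        have hB2c : ∀ i : Fin N, (i:ℕ)+1 = m-2 → B2 i = 0 := by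
          intro i hi
          have n1 : ¬((i:ℕ)+1 = m) := by omega
          have n2 : ¬((i:ℕ)+1 = m-3) := by omega
          simp only [hB2v, eFin, if_neg n1, if_neg n2]
          rw [hv0 i hi]; ring
        have hchain := chain B2 hB2c
          (by rw [show (fun i => B2 i - eFin N (m-3) i + eFin N (m-1) i + eFin N (m-2) i) = Qa
                from funext fun i => by simp only [hB2v, hQa]; ring]; exact zQa)
          (by rw [show (fun i => B2 i - 2 * eFin N (m-3) i + eFin N (m-2) i) = Qb
                from funext fun i => by simp only [hB2v, hQb]; ring]; exact zQb)
          (fun _ => by rw [show (fun i => B2 i - 2 * eFin N (m-3) i + eFin N (m-4) i) = Qc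
                from funext fun i => by simp only [hB2v, hQc]; ring]; exact zQc)
        rw [show (fun i => B2 i - eFin N (m-2) i + 2 * eFin N (m-1) i) = A5 from
              funext fun i => by simp only [hB2v, hA5]; ring,
            show (fun i => B2 i - eFin N (m-2) i) = A4 from
              funext fun i => by simp only [hB2v, hA4]; ring] at hchain
        have h0 : Z A4 = (RatFunc.X : RatFunc ℚ) ^ (ellFin N A4 (m-3) - ((m-3:ℕ):ℤ)) * Z P2 := by
          by_cases h4 : 4 ≤ m
          · have hr := hZ (m-3) (by omega) (by omega) A4
            rw [show m-3-1 = m-4 from by omega, show m-3+1 = m-2 from by omega] at hr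
            rw [show (fun i => A4 i - 2 * eFin N (m-3) i) = P2 from funext fun i => by
                  simp only [hA4, hP2]; ring] at hr
            rw [show (fun i => A4 i + eFin N (m-4) i - 2 * eFin N (m-3) i + eFin N (m-2) i) = Qc
                from funext fun i => by simp only [hA4, hQc]; ring] at hr
            rw [zQc] at hr
            simpa using hr
          · have hAP : A4 = P2 := funext fun i => by
              simp only [hA4, hP2, show m-3 = 0 from by omega, eFin_zero']; ring
            rw [hAP, show m-3 = 0 from by omega, ellFin_zero']
            simp
        have h1 : Z A5 = (RatFunc.X : RatFunc ℚ) ^ (ellFin N A5 (m-3) - ((m-3:ℕ):ℤ)) * Z P1 := by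
          by_cases h4 : 4 ≤ m
          · have hr := hZ (m-3) (by omega) (by omega) A5
            rw [show m-3-1 = m-4 from by omega, show m-3+1 = m-2 from by omega] at hr
            rw [show (fun i => A5 i - 2 * eFin N (m-3) i) = P1 from funext fun i => by
                  simp only [hA5, hP1]; ring] at hr
            rw [show (fun i => A5 i + eFin N (m-4) i - 2 * eFin N (m-3) i + eFin N (m-2) i) = Qd
                from funext fun i => by simp only [hA5, hQd]; ring] at hr
            rw [zQd] at hr
            simpa using hr
          · have hAP : A5 = P1 := funext fun i => by
              simp only [hA5, hP1, show m-3 = 0 from by omega, eFin_zero']; ring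
            rw [hAP, show m-3 = 0 from by omega, ellFin_zero']
            simp
        have hcb1 := ellFin_comb N L (-1) (-1) (2) (0) (m) (m-2) (m-1) (0) (m-1) (by omega) (by omega) (by omega) (by omega)
        rw [show (fun i => L i + (-1) * eFin N (m) i + (-1) * eFin N (m-2) i + (2) * eFin N (m-1) i + (0) * eFin N (0) i) = P1 from funext fun i => by simp only [hP1]; ring] at hcb1
        have hcb2 := ellFin_comb N L (-1) (-1) (2) (2) (m) (m-2) (m-1) (m-3) (m-1) (by omega) (by omega) (by omega) (by omega)
        rw [show (fun i => L i + (-1) * eFin N (m) i + (-1) * eFin N (m-2) i + (2) * eFin N (m-1) i + (2) * eFin N (m-3) i) = A5 from funext fun i => by simp only [hA5]; ring] at hcb2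
        have hcb3 := ellFin_comb N L (-1) (-1) (2) (2) (m) (m-2) (m-1) (m-3) (m-3) (by omega) (by omega) (by omega) (by omega)
        rw [show (fun i => L i + (-1) * eFin N (m) i + (-1) * eFin N (m-2) i + (2) * eFin N (m-1) i + (2) * eFin N (m-3) i) = A5 from funext fun i => by simp only [hA5]; ring] at hcb3
        have hcb4 := ellFin_comb N L (-1) (-1) (2) (0) (m) (m-2) (m-3) (0) (m-3) (by omega) (by omega) (by omega) (by omega)
        rw [show (fun i => L i + (-1) * eFin N (m) i + (-1) * eFin N (m-2) i + (2) * eFin N (m-3) i + (0) * eFin N (0) i) = A4 from funext fun i => by simp only [hA4]; ring] at hcb4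
        have hI2 : (ellFin N A5 (m-3) - ((m-3:ℕ):ℤ)) + (ellFin N P1 (m-1) - ((m-1:ℕ):ℤ))
            = (ellFin N A5 (m-1) - ((m-1:ℕ):ℤ)) + (ellFin N A4 (m-3) - ((m-3:ℕ):ℤ)) := by
          omega
        have hkey : (RatFunc.X : RatFunc ℚ) ^ (ellFin N A5 (m-3) - ((m-3:ℕ):ℤ)) * Z P1
            = (RatFunc.X : RatFunc ℚ) ^ (ellFin N A5 (m-3) - ((m-3:ℕ):ℤ)) *
              ((RatFunc.X : RatFunc ℚ) ^ (ellFin N P1 (m-1) - ((m-1:ℕ):ℤ)) * Z P2) := by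
          rw [← h1, hchain, h0, ← mul_assoc, ← mul_assoc, ← zpow_add₀ hq, ← zpow_add₀ hq, hI2]
        have hfin : Z P1 = (RatFunc.X : RatFunc ℚ) ^ (ellFin N P1 (m-1) - ((m-1:ℕ):ℤ)) * Z P2 :=
          mul_left_cancel₀ (zpow_ne_zero _ hq) hkey
        rw [hfin] at main_rel
        exact (left_eq_add.mp main_rel)
end

section
/- Let p, k be coprime positive integers with 0 < 2k < p, and let N ≤ M be positive integers with M < (p−1)/k − 1. Let a = l_{α+1}, b = l_{β+1} ≥ 2 be Takahashi lengths with β ≥ M and (L_1,…,L_N) ∈ ℤ_{≥0}^N with the required parity. Then the bosonic polynomials satisfy B_{a,b}^{(p,k,M)}((L_1,…,L_N,0,…,0)) = B_{a,b}^{(p,k,N)}((L_1,…,L_N)), where the left argument is the M-dimensional vector obtained by appending M−N zeros. -/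
open scoped BigOperators Classical

noncomputable section

/-- The finite q-Pochhammer symbol `(x)_n = ∏_{i=0}^{n-1} (1 - x qⁱ)`. -/
def qPoch (q x : ℂ) (n : ℕ) : ℂ := ∏ i ∈ Finset.range n, (1 - x * q ^ i)

/-- The Gaussian binomial `[L; a]_q = (q^{L-a+1})_a / (q)_a` for `a ≥ 0`, `0` otherwise. -/
def qBinom (q : ℂ) (L a : ℤ) : ℂ :=
  if 0 ≤ a then qPoch q (q ^ (L - a + 1)) a.toNat / qPoch q q a.toNat else 0

/-- `(T⁻¹ L)_i = Σ_{j=1}^N min{i,j} L_j` for the N×N tadpole matrix (1-based indices). -/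
def tadInv (N : ℕ) (L : ℕ → ℤ) (i : ℕ) : ℤ := ∑ j ∈ Finset.Icc 1 N, (min i j : ℤ) * L j

/-- The quadratic form `L · T⁻¹ L` for the N×N tadpole matrix. -/
def tadQuad (N : ℕ) (L : ℕ → ℤ) : ℚ :=
  ∑ i ∈ Finset.Icc 1 N, ∑ j ∈ Finset.Icc 1 N, (min i j : ℚ) * (L i) * (L j)

/-- Index type for the q-supernomial sum: tuples `(j_1,…,j_N)` of naturals with total `c`
(1-based; entries outside `1..N` vanish). -/
def SuperIndex (N : ℕ) (c : ℚ) :=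
  {j : ℕ → ℕ // (∀ k, (k = 0 ∨ N < k) → j k = 0) ∧
    ((∑ k ∈ Finset.Icc 1 N, j k : ℕ) : ℚ) = c}

/-- The q-supernomial coefficient `[L; a]`; it vanishes unless `a + ℓ_N/2 ∈ ℤ_{≥0}`. -/
def supernomial (q : ℂ) (N : ℕ) (L : ℕ → ℤ) (a : ℚ) : ℂ :=
  ∑' j : SuperIndex N (a + (tadInv N L N : ℚ) / 2),
    q ^ (∑ k ∈ Finset.Icc 2 N, (j.1 (k - 1) : ℤ) * ((∑ i ∈ Finset.Icc k N, L i) - (j.1 k : ℤ))) *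
      ∏ k ∈ Finset.Icc 1 N, qBinom q (L k + (j.1 (k + 1) : ℤ)) (j.1 k)

/-- The dual q-supernomial `T(L,a) = q^{¼ L·T⁻¹L - a²/N} [L;a]_{1/q}`. -/
def dualSupernomial (q : ℂ) (N : ℕ) (L : ℕ → ℤ) (a : ℚ) : ℂ :=
  q ^ ((tadQuad N L / 4 - a ^ 2 / N : ℚ) : ℂ) * supernomial q⁻¹ N L a

/-- N-dimensional unit vector `e_n` (1-based; `e_0 = 0` by convention as index 0 is unused). -/
def uvecZ (n : ℕ) : ℕ → ℤ := fun i => if i = n then 1 else 0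



/-- Continued fraction value `ν_i + 1/(ν_{i+1} + ⋯ + 1/(ν_{i+m} + 2))` (fuel `m`). -/
def cfracAux (ν : ℕ → ℕ) : ℕ → ℕ → ℚ
  | 0, i => (ν i : ℚ) + 2
  | m + 1, i => (ν i : ℚ) + 1 / cfracAux ν m (i + 1)

/-- `t_m = ν_0 + ⋯ + ν_{m-1}` (for `m ≥ 1`). -/
def tnat (ν : ℕ → ℕ) (m : ℕ) : ℕ := ∑ j ∈ Finset.range m, ν j

/-- `t_m` as an integer, with `t_0 = -1`. -/
def tz (ν : ℕ → ℕ) (m : ℕ) : ℤ := if m = 0 then -1 else (tnat ν m : ℤ)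

/-- `yseq ν n (m+1) = y_m`:  `y_{-1}=0, y_0=1`,
`y_{m+1}=y_{m-1}+(ν_m+2δ_{m,n}+δ_{m,0})y_m`. -/
def yseq (ν : ℕ → ℕ) (n : ℕ) : ℕ → ℤ
  | 0 => 0
  | 1 => 1
  | m + 2 => yseq ν n m +
      ((ν m : ℤ) + 2 * (if m = n then 1 else 0) + (if m = 0 then 1 else 0)) * yseq ν n (m + 1)

/-- `ybar ν n (m+1) = ȳ_m`:  `ȳ_{-1}=-1, ȳ_0=1`, same recurrence. -/
def ybar (ν : ℕ → ℕ) (n : ℕ) : ℕ → ℤ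
  | 0 => -1
  | 1 => 1
  | m + 2 => ybar ν n m +
      ((ν m : ℤ) + 2 * (if m = n then 1 else 0) + (if m = 0 then 1 else 0)) * ybar ν n (m + 1)

/-- the zone of `j`: the greatest `m ≤ n` with `t_m < j`. -/
def zoneOf (ν : ℕ → ℕ) (n j : ℕ) : ℕ := Nat.findGreatest (fun m => tz ν m < (j : ℤ)) n

/-- Takahashi length `l_{j+1} = y_{m-1} + (j - t_m) y_m` where `m` is the zone of `j`. -/
def taka (ν : ℕ → ℕ) (n j : ℕ) : ℤ :=
  yseq ν n (zoneOf ν n j) + ((j : ℤ) - tz ν (zoneOf ν n j)) * yseq ν n (zoneOf ν n j + 1)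

/-- Truncated Takahashi length `l̄_{j+1}`. -/
def takabar (ν : ℕ → ℕ) (n j : ℕ) : ℤ :=
  ybar ν n (zoneOf ν n j) + ((j : ℤ) - tz ν (zoneOf ν n j)) * ybar ν n (zoneOf ν n j + 1)

/-- The fractional incidence matrix `I_B`. -/
def IB (ν : ℕ → ℕ) (n : ℕ) (i j : ℕ) : ℤ :=
  if i = tnat ν (n + 1) then
    (if i = j + 1 then 1 else 0) + (if ν n = 0 ∧ i = j then 1 else 0)
  else if ∃ m ∈ Finset.Icc 1 (n - (if ν n = 0 then 1 else 0)), i = tnat ν m then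
    (if i = j + 1 then 1 else 0) + (if i = j then 1 else 0) - (if j = i + 1 then 1 else 0)
  else (if i = j + 1 then 1 else 0) + (if j = i + 1 then 1 else 0)

/-- The Cartan-type matrix `B = 2I - I_B`. -/
def Bmat (ν : ℕ → ℕ) (n : ℕ) (i j : ℕ) : ℤ :=
  2 * (if i = j then 1 else 0) - IB ν n i j

/-- Parity vectors `Q^{(j)}_i` (with fuel for termination). -/
def Qaux (ν : ℕ → ℕ) (n j : ℕ) : ℕ → ℕ → ℤ
  | 0, _ => 0
  | fuel + 1, i =>
    if j ≤ i then 0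
    else if tz ν (zoneOf ν n j) ≤ (i : ℤ) then (j : ℤ) - i
    else Qaux ν n j fuel (i + 1) +
         Qaux ν n j fuel (tnat ν (Nat.findGreatest (fun m => tz ν m ≤ (i : ℤ)) n + 1) + 1)

/-- Parity vector `Q^{(j)}_i`. -/
def Qvec (ν : ℕ → ℕ) (n j i : ℕ) : ℤ := Qaux ν n j j i

/-- The vector `u_a = e_α - Σ_{i=m+1}^n e_{t_i}` where `m` is the zone of `α`. -/
def uTS (ν : ℕ → ℕ) (n α : ℕ) (j : ℕ) : ℤ :=
  (if j = α then 1 else 0) -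
    ∑ i ∈ Finset.Icc (zoneOf ν n α + 1) n, (if j = tnat ν i then 1 else 0)

/-- The vector `A_{a,b}`: `(u_b)_j` on odd zones, `(u_a)_j` on even zones. -/
def Avec (ν : ℕ → ℕ) (n α β : ℕ) (j : ℕ) : ℤ :=
  if Odd (zoneOf ν n j) then uTS ν n β j else uTS ν n α j

/-- The parity vector `Q_{a,b}`. -/
def Qab (ν : ℕ → ℕ) (n N α β : ℕ) (L : ℕ → ℤ) (i : ℕ) : ℤ :=
  (∑ j ∈ Finset.Icc 1 (tnat ν (n + 1)), (uTS ν n α j + uTS ν n β j) * Qvec ν n j i)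
  + ((if α = tnat ν (n + 1) + 1 then 1 else 0) + (if β = tnat ν (n + 1) + 1 then 1 else 0))
      * Qvec ν n (tnat ν (n + 1) + 1) i
  + ∑ j ∈ Finset.Icc 1 N, L j * Qvec ν n j i


/-- Gaussian binomial with rational arguments; nonzero only on integer arguments. -/
def qBinomQ (q : ℂ) (L a : ℚ) : ℂ :=
  if L.den = 1 ∧ a.den = 1 then qBinom q L.num a.num else 0

/-- Index type for the fermionic sum: `m ∈ ℤ_{≥0}^{t_{n+1}}` with `m ≡ Q_{a,b} (mod 2)`. -/
def FermIndex (ν : ℕ → ℕ) (n N α β : ℕ) (L : ℕ → ℤ) :=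
  {m : ℕ → ℕ // (∀ k, (k = 0 ∨ tnat ν (n + 1) < k) → m k = 0) ∧
    ∀ i ∈ Finset.Icc 1 (tnat ν (n + 1)), (m i : ℤ) ≡ Qab ν n N α β L i [ZMOD 2]}

/-- The fermionic polynomial `F_{a,b}^{(p,k,N)}(L)` (with normalization exponent `Δ`):
`q^Δ Σ_{m ≡ Q_{a,b} (2)} q^{¼ mBm - ½ A_{a,b}·m} ∏_j [m_j+n_j; m_j]`, where `n` is
determined by the `(m,n)`-system `m + n = ½(I_B m + u_a + u_b + Σᵢ L_i e_i)`. -/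
def Ferm (q : ℂ) (ν : ℕ → ℕ) (n N α β : ℕ) (L : ℕ → ℤ) (Δ : ℚ) : ℂ :=
  q ^ ((Δ : ℚ) : ℂ) *
  ∑' m : FermIndex ν n N α β L,
    q ^ (((∑ i ∈ Finset.Icc 1 (tnat ν (n + 1)), ∑ j ∈ Finset.Icc 1 (tnat ν (n + 1)),
            (Bmat ν n i j : ℚ) * (m.1 i) * (m.1 j)) / 4
        - (∑ j ∈ Finset.Icc 1 (tnat ν (n + 1)), (Avec ν n α β j : ℚ) * (m.1 j)) / 2 : ℚ) : ℂ) *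
    ∏ j ∈ Finset.Icc 1 (tnat ν (n + 1)),
      qBinomQ q ((m.1 j : ℚ) +
        ((uTS ν n α j + uTS ν n β j + (if j ≤ N then L j else 0) -
          ∑ t ∈ Finset.Icc 1 (tnat ν (n + 1)), Bmat ν n j t * m.1 t : ℤ) : ℚ) / 2)
        (m.1 j)

/-- The bosonic polynomial `B_{a,b}^{(p,k,d)}(L)`, with the truncated Takahashi length
`b̄` passed explicitly and `r = b - d(b - b̄)`. -/
def Bos (q : ℂ) (p k d : ℕ) (a b bbar : ℤ) (L : ℕ → ℤ) : ℂ :=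
  q ^ (((b - a : ℚ) ^ 2 / (4 * d) : ℚ) : ℂ) *
  ∑' j : ℤ,
    (q ^ ((((j : ℚ) * ((p : ℚ) * ((p : ℚ) - k * d) * j + (p : ℚ) * ((b : ℚ) - d * (b - bbar)) -
        ((p : ℚ) - k * d) * a)) / d : ℚ) : ℂ) *
        dualSupernomial q d L ((b - a : ℚ) / 2 + p * j)
    - q ^ (((((p : ℚ) * j + a) * (((p : ℚ) - k * d) * j + ((b : ℚ) - d * (b - bbar)))) / d : ℚ) : ℂ) *
        dualSupernomial q d L ((b + a : ℚ) / 2 + p * j))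

end


section AuxPadding

lemma qBinom_eq_zero_of_lt {q : ℂ} (hq : q ≠ 0) {L a : ℤ} (hL : 0 ≤ L) (h : L < a) :
    qBinom q L a = 0 := by
  have ha : 0 ≤ a := le_trans hL h.le
  rw [qBinom, if_pos ha]
  have hz : qPoch q (q ^ (L - a + 1)) a.toNat = 0 := by
    rw [qPoch]
    refine Finset.prod_eq_zero (i := (a - 1 - L).toNat) (Finset.mem_range.mpr (by omega)) ?_
    have h1 : q ^ (L - a + 1) * q ^ ((a - 1 - L).toNat) =
        q ^ ((L - a + 1) + ((a - 1 - L).toNat : ℤ)) := by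
      rw [← zpow_natCast q ((a - 1 - L).toNat), ← zpow_add₀ hq]
    rw [h1]
    have h2 : (L - a + 1) + ((a - 1 - L).toNat : ℤ) = 0 := by omega
    rw [h2, zpow_zero, sub_self]
  rw [hz, zero_div]

lemma qBinom_zero_zero (q : ℂ) : qBinom q 0 0 = 1 := by
  simp [qBinom, qPoch]

lemma tadInv_pad {N M : ℕ} (hNM : N ≤ M) (L : ℕ → ℤ) :
    tadInv M (fun i => if i ≤ N then L i else 0) M = tadInv N L N := by
  unfold tadInv
  rw [← Finset.sum_subset (Finset.Icc_subset_Icc_right hNM)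
      (fun j hj hj' => by
        simp only [Finset.mem_Icc] at hj hj'
        have h0 : (fun i => if i ≤ N then L i else 0) j = 0 := if_neg (by omega)
        rw [h0, mul_zero])]
  refine Finset.sum_congr rfl fun j hj => ?_
  simp only [Finset.mem_Icc] at hj
  have h0 : (fun i => if i ≤ N then L i else 0) j = L j := if_pos hj.2
  rw [h0]
  have h1 : ((M : ℤ) ⊓ (j : ℤ)) = (N : ℤ) ⊓ (j : ℤ) := by omega
  rw [h1]

lemma tadQuad_pad {N M : ℕ} (hNM : N ≤ M) (L : ℕ → ℤ) :
    tadQuad M (fun i => if i ≤ N then L i else 0) = tadQuad N L := by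
  unfold tadQuad
  rw [← Finset.sum_subset (Finset.Icc_subset_Icc_right hNM)
      (fun i hi hi' => Finset.sum_eq_zero fun j hj => by
        simp only [Finset.mem_Icc] at hi hi'
        have h0 : (fun i => if i ≤ N then L i else 0) i = 0 := if_neg (by omega)
        rw [h0]
        push_cast; ring)]
  refine Finset.sum_congr rfl fun i hi => ?_
  simp only [Finset.mem_Icc] at hi
  rw [← Finset.sum_subset (Finset.Icc_subset_Icc_right hNM)
      (fun j hj hj' => by
        simp only [Finset.mem_Icc] at hj hj'
        have h0 : (fun i => if i ≤ N then L i else 0) j = 0 := if_neg (by omega)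
        rw [h0]
        push_cast; ring)]
  refine Finset.sum_congr rfl fun j hj => ?_
  simp only [Finset.mem_Icc] at hj
  have h0i : (fun i => if i ≤ N then L i else 0) i = L i := if_pos hi.2
  have h0j : (fun i => if i ≤ N then L i else 0) j = L j := if_pos hj.2
  rw [h0i, h0j]

set_option maxHeartbeats 1000000 in
lemma supernomial_pad {q : ℂ} (hq : q ≠ 0) {N M : ℕ} (hNM : N ≤ M)
    (L : ℕ → ℤ) (a : ℚ) :
    supernomial q M (fun i => if i ≤ N then L i else 0) a = supernomial q N L a := by
  unfold supernomial
  rw [tadInv_pad hNM]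
  set c : ℚ := a + (tadInv N L N : ℚ) / 2 with hc
  have hLp : ∀ k, N < k → (if k ≤ N then L k else (0:ℤ)) = 0 := fun k hk => if_neg (by omega)
  have hsum : ∀ x : SuperIndex N c, ((∑ k ∈ Finset.Icc 1 M, x.1 k : ℕ) : ℚ) = c := by
    intro x
    have h : (∑ k ∈ Finset.Icc 1 M, x.1 k) = ∑ k ∈ Finset.Icc 1 N, x.1 k :=
      (Finset.sum_subset (Finset.Icc_subset_Icc_right hNM)
        (fun k hk hk' => x.2.1 k (Or.inr (by
          simp only [Finset.mem_Icc] at hk hk'; omega)))).symm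
    rw [h]
    exact x.2.2
  let ι : SuperIndex N c → SuperIndex M c := fun x =>
    ⟨x.1, ⟨fun k hk => x.2.1 k (hk.imp id fun h => lt_of_le_of_lt hNM h), hsum x⟩⟩
  have hexp : ∀ x : SuperIndex N c,
      (∑ k ∈ Finset.Icc 2 M, (x.1 (k - 1) : ℤ) *
          ((∑ i ∈ Finset.Icc k M, (if i ≤ N then L i else 0)) - (x.1 k : ℤ)))
      = ∑ k ∈ Finset.Icc 2 N, (x.1 (k - 1) : ℤ) *
          ((∑ i ∈ Finset.Icc k N, L i) - (x.1 k : ℤ)) := by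
    intro x
    rw [← Finset.sum_subset (Finset.Icc_subset_Icc_right hNM)
        (fun k hk hk' => by
          simp only [Finset.mem_Icc] at hk hk'
          have hkN : N < k := by omega
          have h1 : x.1 k = 0 := x.2.1 k (Or.inr hkN)
          have h2 : (∑ i ∈ Finset.Icc k M, (if i ≤ N then L i else (0:ℤ))) = 0 :=
            Finset.sum_eq_zero fun i hi => hLp i (by
              simp only [Finset.mem_Icc] at hi; omega)
          rw [h1, h2]
          norm_num)]
    refine Finset.sum_congr rfl fun k hk => ?_
    simp only [Finset.mem_Icc] at hk
    have h3 : (∑ i ∈ Finset.Icc k M, (if i ≤ N then L i else (0:ℤ)))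
        = ∑ i ∈ Finset.Icc k N, L i := by
      rw [← Finset.sum_subset (Finset.Icc_subset_Icc_right hNM)
          (fun i hi hi' => hLp i (by
            simp only [Finset.mem_Icc] at hi hi'; omega))]
      refine Finset.sum_congr rfl fun i hi => ?_
      simp only [Finset.mem_Icc] at hi
      rw [if_pos hi.2]
    rw [h3]
  have hprod : ∀ x : SuperIndex N c,
      (∏ k ∈ Finset.Icc 1 M, qBinom q ((if k ≤ N then L k else 0) + (x.1 (k + 1) : ℤ)) (x.1 k))
      = ∏ k ∈ Finset.Icc 1 N, qBinom q (L k + (x.1 (k + 1) : ℤ)) (x.1 k) := by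
    intro x
    rw [← Finset.prod_subset (Finset.Icc_subset_Icc_right hNM)
        (fun k hk hk' => by
          simp only [Finset.mem_Icc] at hk hk'
          have hkN : N < k := by omega
          have h1 : x.1 k = 0 := x.2.1 k (Or.inr hkN)
          have h2 : x.1 (k + 1) = 0 := x.2.1 (k + 1) (Or.inr (by omega))
          rw [hLp k hkN, h1, h2]
          simpa using qBinom_zero_zero q)]
    refine Finset.prod_congr rfl fun k hk => ?_
    simp only [Finset.mem_Icc] at hk
    rw [if_pos hk.2]
  have hterm : ∀ x : SuperIndex N c,
      (q ^ (∑ k ∈ Finset.Icc 2 M, (x.1 (k - 1) : ℤ) *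
          ((∑ i ∈ Finset.Icc k M, (if i ≤ N then L i else 0)) - (x.1 k : ℤ))) *
        ∏ k ∈ Finset.Icc 1 M, qBinom q ((if k ≤ N then L k else 0) + (x.1 (k + 1) : ℤ)) (x.1 k))
      = q ^ (∑ k ∈ Finset.Icc 2 N, (x.1 (k - 1) : ℤ) *
          ((∑ i ∈ Finset.Icc k N, L i) - (x.1 k : ℤ))) *
        ∏ k ∈ Finset.Icc 1 N, qBinom q (L k + (x.1 (k + 1) : ℤ)) (x.1 k) := by
    intro x
    rw [hexp x, hprod x]
  refine tsum_eq_tsum_of_ne_zero_bij (fun x => ι x.1) ?_ ?_ ?_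
  · intro x y hxy
    have : (ι x.1).1 = (ι y.1).1 := congrArg Subtype.val hxy
    exact Subtype.ext (Subtype.ext this)
  · intro y hy
    simp only [Function.mem_support] at hy
    have hyM : ∀ k, M < k → y.1 k = 0 := fun k hk => y.2.1 k (Or.inr hk)
    have hfac : ∀ k ∈ Finset.Icc 1 M,
        qBinom q ((if k ≤ N then L k else 0) + (y.1 (k + 1) : ℤ)) (y.1 k) ≠ 0 := by
      intro k hk hzero
      exact hy (by rw [Finset.prod_eq_zero hk hzero, mul_zero])
    have hstep : ∀ k, N < k → k ≤ M → (y.1 k : ℤ) ≤ (y.1 (k + 1) : ℤ) := by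
      intro k h1 h2
      by_contra hlt
      push_neg at hlt
      refine hfac k (Finset.mem_Icc.mpr ⟨by omega, h2⟩) ?_
      rw [hLp k h1, zero_add]
      exact qBinom_eq_zero_of_lt hq (by positivity) hlt
    have hzeroN : ∀ k, N < k → y.1 k = 0 := by
      have key : ∀ t k, N < k → M + 1 ≤ k + t → y.1 k = 0 := by
        intro t
        induction t with
        | zero => exact fun k h1 h2 => hyM k (by omega)
        | succ t ih =>
          intro k h1 h2
          rcases Nat.lt_or_ge M k with h | h
          · exact hyM k h
          · have h3 := hstep k h1 h
            have h4 := ih (k + 1) (by omega) (by omega)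
            omega
      exact fun k h1 => key (M + 1) k h1 (by omega)
    have hsumN : ((∑ k ∈ Finset.Icc 1 N, y.1 k : ℕ) : ℚ) = c := by
      have h : (∑ k ∈ Finset.Icc 1 N, y.1 k) = ∑ k ∈ Finset.Icc 1 M, y.1 k :=
        Finset.sum_subset (Finset.Icc_subset_Icc_right hNM)
          (fun k hk hk' => hzeroN k (by
            simp only [Finset.mem_Icc] at hk hk'; omega))
      rw [h]
      exact y.2.2
    have hcond : (∀ k, (k = 0 ∨ N < k) → y.1 k = 0) ∧
        ((∑ k ∈ Finset.Icc 1 N, y.1 k : ℕ) : ℚ) = c :=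
      ⟨fun k hk => hk.elim (fun h => y.2.1 k (Or.inl h)) (hzeroN k), hsumN⟩
    refine ⟨⟨⟨y.1, hcond⟩, ?_⟩, Subtype.ext rfl⟩
    intro hgz
    exact hy ((hterm ⟨y.1, hcond⟩).trans hgz)
  · exact fun x => hterm x.1

lemma cpow_triple {q : ℂ} (hq : q ≠ 0) (r1 r2 r3 s1 s2 s3 : ℚ) (S : ℂ)
    (h : r1 + r2 + r3 = s1 + s2 + s3) :
    q ^ ((r1 : ℚ) : ℂ) * (q ^ ((r2 : ℚ) : ℂ) * (q ^ ((r3 : ℚ) : ℂ) * S)) =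
    q ^ ((s1 : ℚ) : ℂ) * (q ^ ((s2 : ℚ) : ℂ) * (q ^ ((s3 : ℚ) : ℂ) * S)) := by
  have e : ∀ u v w : ℚ, q ^ ((u : ℚ) : ℂ) * (q ^ ((v : ℚ) : ℂ) * (q ^ ((w : ℚ) : ℂ) * S))
      = q ^ (((u + v + w : ℚ) : ℚ) : ℂ) * S := by
    intro u v w
    push_cast
    rw [Complex.cpow_add _ _ hq, Complex.cpow_add _ _ hq]
    ring
  rw [e, e, h]

end AuxPadding

set_option maxHeartbeats 1000000 in
/-- equation (5.20) for `X = B`: for coprime `p, k` with `0 < 2k < p`,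
positive integers `N ≤ M < (p-1)/k - 1`, Takahashi lengths `a = l_{α+1}`,
`b = l_{β+1} ≥ 2` with `β ≥ M`, and `(L_1,…,L_N) ∈ ℤ_{≥0}^N` with `a + b + ℓ_N` even,
`B_{a,b}^{(p,k,M)}((L_1,…,L_N,0,…,0)) = B_{a,b}^{(p,k,N)}((L_1,…,L_N))`
(generic `q`). -/
theorem bosonic_padding (p k : ℕ) (hk : 0 < k) (hpk : 2 * k < p)
    (hcop : Nat.Coprime p k)
    (n : ℕ) (ν : ℕ → ℕ) (hν : ∀ i, 1 ≤ i → i ≤ n → 1 ≤ ν i)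
    (hcf : (p : ℚ) / k = 1 + cfracAux ν n 0)
    (N M : ℕ) (hN : 0 < N) (hNM : N ≤ M) (hMpk : (M : ℚ) < ((p : ℚ) - 1) / k - 1)
    (α β : ℕ) (hα : (α : ℤ) ≤ (tnat ν (n + 1) : ℤ) + 1)
    (hβ : (β : ℤ) ≤ (tnat ν (n + 1) : ℤ) + 1)
    (a b : ℤ) (hadef : a = taka ν n α) (hbdef : b = taka ν n β)
    (hb2 : 2 ≤ b) (hβM : M ≤ β)
    (L : ℕ → ℤ) (hL : ∀ i ∈ Finset.Icc 1 N, 0 ≤ L i)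
    (hpar : Even (a + b + tadInv N L N))
    (q : ℂ) (hq0 : q ≠ 0) (hq1 : ∀ m : ℕ, 0 < m → q ^ m ≠ 1) :
    Bos q p k M a b (takabar ν n β) (fun i => if i ≤ N then L i else 0)
      = Bos q p k N a b (takabar ν n β) L := by
  have hqi : q⁻¹ ≠ 0 := inv_ne_zero hq0
  have hM0 : ((M : ℚ)) ≠ 0 := Nat.cast_ne_zero.mpr (by omega)
  have hN0 : ((N : ℚ)) ≠ 0 := Nat.cast_ne_zero.mpr (by omega)
  simp only [Bos, dualSupernomial, tadQuad_pad hNM L, supernomial_pad hqi hNM L]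
  rw [← tsum_mul_left, ← tsum_mul_left]
  refine tsum_congr fun j => ?_
  rw [mul_sub (α := ℂ), mul_sub (α := ℂ)]
  congr 1
  · exact cpow_triple hq0 _ _ _ _ _ _ _ (by field_simp; ring)
  · exact cpow_triple hq0 _ _ _ _ _ _ _ (by field_simp; ring)
end

section
/- Let N ≥ 2 be an integer and L ∈ ℤ^N with L − 2e_N ∈ ℤ_{≥0}^N, ℓ = T^{-1}L. Then the modified q-supernomial T̃(L,a) = q^{a ℓ_1} [L; a − ℓ_N/2]_{1/q} satisfies the recurrence T̃(L,a) = q^{ℓ_1} T̃(L + e_{N−1} − e_N, a−1) + q^{2a − N + Σ_{i=1}^N (N−i)L_i} T̃(L − 2e_N, a−N) + T̃(L + e_{N−1} − 2e_N, a). -/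
open scoped BigOperators Classical

noncomputable section

/-- The modified q-supernomial `T̃(L,a) = q^{a ℓ_1} [L; a - ℓ_N/2]_{1/q}`. -/
def modDualSupernomial (q : ℂ) (N : ℕ) (L : ℕ → ℤ) (a : ℤ) : ℂ :=
  q ^ (a * tadInv N L 1) * supernomial q⁻¹ N L ((a : ℚ) - (tadInv N L N : ℚ) / 2)

end


noncomputable section
namespace SupAux
open Finset

variable {p : ℂ}

lemma qPoch_succ (q x : ℂ) (n : ℕ) : qPoch q x (n+1) = qPoch q x n * (1 - x * q^n) :=
  Finset.prod_range_succ _ _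

lemma qPoch_succ' (q x : ℂ) (n : ℕ) : qPoch q x (n+1) = (1 - x) * qPoch q (x*q) n := by
  have h : ∏ i ∈ Finset.range n, (1 - x * q^(i+1)) = ∏ i ∈ Finset.range n, (1 - x*q*q^i) :=
    Finset.prod_congr rfl fun i _ => by rw [pow_succ]; ring
  rw [qPoch, Finset.prod_range_succ', h, mul_comm, qPoch]
  norm_num

variable {p : ℂ}

lemma zpow_helper (hp0 : p ≠ 0) (e f g : ℤ) (h : e + f = g) : p^e * p^f = p^g := by
  rw [← zpow_add₀ hp0, h]

lemma qPoch_p_ne_zero (hq1 : ∀ m : ℕ, 0 < m → p ^ m ≠ 1) (n : ℕ) : qPoch p p n ≠ 0 := by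
  rw [qPoch, Finset.prod_ne_zero_iff]
  intro i _
  have := hq1 (i+1) (Nat.succ_pos i)
  rw [pow_succ'] at this
  intro h
  exact this (by linear_combination -h)

lemma qBinom_neg {l a : ℤ} (ha : a < 0) : qBinom p l a = 0 := if_neg (not_le.mpr ha)

lemma qBinom_zero (l : ℤ) : qBinom p l 0 = 1 := by
  simp [qBinom, qPoch]

lemma pascal₁ (hp0 : p ≠ 0) (hq1 : ∀ m : ℕ, 0 < m → p ^ m ≠ 1) (l a : ℤ) :
    qBinom p l a = qBinom p (l-1) a + p^(l-a) * qBinom p (l-1) (a-1) := by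
  rcases lt_trichotomy a 0 with h|h|h
  · rw [qBinom_neg h, qBinom_neg h, qBinom_neg (by omega : a - 1 < 0)]; ring
  · subst h; rw [qBinom_zero, qBinom_zero, qBinom_neg (by norm_num : (0:ℤ) - 1 < 0)]; ring
  · obtain ⟨n, rfl⟩ : ∃ n : ℕ, a = (n:ℤ)+1 := ⟨(a-1).toNat, by omega⟩
    rw [qBinom, qBinom, qBinom, if_pos (by omega : (0:ℤ) ≤ (n:ℤ)+1),
      if_pos (by omega : (0:ℤ) ≤ (n:ℤ)+1), if_pos (by omega : (0:ℤ) ≤ (n:ℤ)+1-1)]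
    have h1 : ((n:ℤ)+1).toNat = n+1 := by omega
    have h2 : ((n:ℤ)+1-1).toNat = n := by omega
    rw [h1, h2, show l - ((n:ℤ)+1) + 1 = l - n by ring,
      show l - 1 - ((n:ℤ)+1) + 1 = l - n - 1 by ring,
      show l - 1 - ((n:ℤ)+1-1) + 1 = l - n by ring,
      show l - ((n:ℤ)+1) = l - n - 1 by ring]
    have r1 : qPoch p (p^(l-(n:ℤ))) (n+1) = qPoch p (p^(l-(n:ℤ))) n * (1 - p^l) := by
      rw [qPoch_succ, ← zpow_natCast p n, zpow_helper hp0 _ _ _ (by ring)]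
    have r2 : qPoch p (p^(l-(n:ℤ)-1)) (n+1) = (1 - p^(l-(n:ℤ)-1)) * qPoch p (p^(l-(n:ℤ))) n := by
      rw [qPoch_succ']
      congr 2
      calc p^(l-(n:ℤ)-1) * p = p^(l-(n:ℤ)-1) * p^(1:ℤ) := by rw [zpow_one]
        _ = p^(l-(n:ℤ)) := zpow_helper hp0 _ _ _ (by ring)
    have r3 : qPoch p p (n+1) = qPoch p p n * (1 - p^((n:ℤ)+1)) := by
      rw [qPoch_succ]
      congr 2
      calc p * p^n = p^(1:ℤ) * p^((n:ℤ)) := by rw [zpow_one, zpow_natCast]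
        _ = p^((n:ℤ)+1) := zpow_helper hp0 _ _ _ (by ring)
    have key : p^l = p^(l-(n:ℤ)-1) * p^((n:ℤ)+1) := (zpow_helper hp0 _ _ _ (by ring)).symm
    rw [r1, r2, r3, key]
    have hC : qPoch p p n ≠ 0 := qPoch_p_ne_zero hq1 n
    have hC1 : (1 - p^((n:ℤ)+1)) ≠ 0 := by
      have h5 := qPoch_p_ne_zero hq1 (n+1)
      rw [r3] at h5
      exact right_ne_zero_of_mul h5
    field_simp
    ring

lemma pascal₂ (hp0 : p ≠ 0) (hq1 : ∀ m : ℕ, 0 < m → p ^ m ≠ 1) (l a : ℤ) :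
    qBinom p l a = p^a * qBinom p (l-1) a + qBinom p (l-1) (a-1) := by
  rcases lt_trichotomy a 0 with h|h|h
  · rw [qBinom_neg h, qBinom_neg h, qBinom_neg (by omega : a - 1 < 0)]; ring
  · subst h; rw [qBinom_zero, qBinom_zero, qBinom_neg (by norm_num : (0:ℤ) - 1 < 0)]; norm_num
  · obtain ⟨n, rfl⟩ : ∃ n : ℕ, a = (n:ℤ)+1 := ⟨(a-1).toNat, by omega⟩
    rw [qBinom, qBinom, qBinom, if_pos (by omega : (0:ℤ) ≤ (n:ℤ)+1),
      if_pos (by omega : (0:ℤ) ≤ (n:ℤ)+1), if_pos (by omega : (0:ℤ) ≤ (n:ℤ)+1-1)]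
    have h1 : ((n:ℤ)+1).toNat = n+1 := by omega
    have h2 : ((n:ℤ)+1-1).toNat = n := by omega
    rw [h1, h2, show l - ((n:ℤ)+1) + 1 = l - n by ring,
      show l - 1 - ((n:ℤ)+1) + 1 = l - n - 1 by ring,
      show l - 1 - ((n:ℤ)+1-1) + 1 = l - n by ring]
    have r1 : qPoch p (p^(l-(n:ℤ))) (n+1) = qPoch p (p^(l-(n:ℤ))) n * (1 - p^l) := by
      rw [qPoch_succ, ← zpow_natCast p n, zpow_helper hp0 _ _ _ (by ring)]
    have r2 : qPoch p (p^(l-(n:ℤ)-1)) (n+1) = (1 - p^(l-(n:ℤ)-1)) * qPoch p (p^(l-(n:ℤ))) n := by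
      rw [qPoch_succ']
      congr 2
      calc p^(l-(n:ℤ)-1) * p = p^(l-(n:ℤ)-1) * p^(1:ℤ) := by rw [zpow_one]
        _ = p^(l-(n:ℤ)) := zpow_helper hp0 _ _ _ (by ring)
    have r3 : qPoch p p (n+1) = qPoch p p n * (1 - p^((n:ℤ)+1)) := by
      rw [qPoch_succ]
      congr 2
      calc p * p^n = p^(1:ℤ) * p^((n:ℤ)) := by rw [zpow_one, zpow_natCast]
        _ = p^((n:ℤ)+1) := zpow_helper hp0 _ _ _ (by ring)
    have key : p^l = p^(l-(n:ℤ)-1) * p^((n:ℤ)+1) := (zpow_helper hp0 _ _ _ (by ring)).symm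
    rw [r1, r2, r3, key]
    have hC : qPoch p p n ≠ 0 := qPoch_p_ne_zero hq1 n
    have hC1 : (1 - p^((n:ℤ)+1)) ≠ 0 := by
      have h5 := qPoch_p_ne_zero hq1 (n+1)
      rw [r3] at h5
      exact right_ne_zero_of_mul h5
    field_simp
    ring


def Msum (N : ℕ) (L : ℕ → ℤ) (k : ℕ) : ℤ := ∑ i ∈ Finset.Icc k N, L i

def GG (p : ℂ) (N : ℕ) (L : ℕ → ℤ) : ℕ → ℕ → ℤ → ℂ
  | 0, _, m => if m = 0 then 1 else 0
  | r+1, t, m => ∑ s ∈ Finset.range (m.toNat + 1),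
      qBinom p (L (r+1) + (t:ℤ)) (s:ℤ) * p ^ ((s:ℤ) * (Msum N L (r+2) - (t:ℤ))) *
        GG p N L r s (m - (s:ℤ))

def DD (p : ℂ) (N : ℕ) (L : ℕ → ℤ) : ℕ → ℕ → ℤ → ℂ
  | 0, _, m => if m = 0 then 1 else 0
  | r+1, t, m => ∑ s ∈ Finset.range (m.toNat + 1),
      p ^ (L (r+1) + (t:ℤ) - (s:ℤ) + (s:ℤ) * (Msum N L (r+2) - (t:ℤ))) *
        qBinom p (L (r+1) + (t:ℤ) - 1) ((s:ℤ) - 1) * DD p N L r s (m - (s:ℤ))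

def ZZ (p : ℂ) (N : ℕ) (L : ℕ → ℤ) (r : ℕ) (t : ℕ) (m : ℤ) : ℂ :=
  ∑ s ∈ Finset.range (m.toNat + 1),
    qBinom p (L r + (t:ℤ) - 1) (s:ℤ) * p ^ ((s:ℤ) * (Msum N L (r+1) - (t:ℤ))) *
      GG p N L (r-1) (s+1) (m - (s:ℤ))

variable {N : ℕ} {L : ℕ → ℤ}

lemma GG_zero (t : ℕ) (m : ℤ) : GG p N L 0 t m = if m = 0 then 1 else 0 := rfl
lemma GG_succ (r t : ℕ) (m : ℤ) : GG p N L (r+1) t m = ∑ s ∈ Finset.range (m.toNat + 1),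
      qBinom p (L (r+1) + (t:ℤ)) (s:ℤ) * p ^ ((s:ℤ) * (Msum N L (r+2) - (t:ℤ))) *
        GG p N L r s (m - (s:ℤ)) := rfl
lemma DD_zero (t : ℕ) (m : ℤ) : DD p N L 0 t m = if m = 0 then 1 else 0 := rfl
lemma DD_succ (r t : ℕ) (m : ℤ) : DD p N L (r+1) t m = ∑ s ∈ Finset.range (m.toNat + 1),
      p ^ (L (r+1) + (t:ℤ) - (s:ℤ) + (s:ℤ) * (Msum N L (r+2) - (t:ℤ))) *
        qBinom p (L (r+1) + (t:ℤ) - 1) ((s:ℤ) - 1) * DD p N L r s (m - (s:ℤ)) := rfl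

lemma GG_neg : ∀ (r t : ℕ) {m : ℤ}, m < 0 → GG p N L r t m = 0 := by
  intro r
  induction r with
  | zero => intro t m hm; rw [GG_zero, if_neg (by omega)]
  | succ r ih =>
    intro t m hm
    rw [GG_succ]
    exact Finset.sum_eq_zero fun s _ => by rw [ih s (by omega : m - (s:ℤ) < 0), mul_zero]

lemma DD_neg : ∀ (r t : ℕ) {m : ℤ}, m < 0 → DD p N L r t m = 0 := by
  intro r
  induction r with
  | zero => intro t m hm; rw [DD_zero, if_neg (by omega)]
  | succ r ih =>
    intro t m hm
    rw [DD_succ]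
    exact Finset.sum_eq_zero fun s _ => by rw [ih s (by omega : m - (s:ℤ) < 0), mul_zero]

lemma ZZ_neg (r t : ℕ) {m : ℤ} (hm : m < 0) : ZZ p N L r t m = 0 :=
  Finset.sum_eq_zero fun s _ => by rw [GG_neg (r-1) (s+1) (by omega : m - (s:ℤ) < 0), mul_zero]

lemma sum_ext {f : ℕ → ℂ} {m : ℤ} {n : ℕ} (hm : m < (n:ℤ)) (hf : ∀ s : ℕ, m < (s:ℤ) → f s = 0) :
    ∑ s ∈ Finset.range (m.toNat + 1), f s = ∑ s ∈ Finset.range n, f s := by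
  rcases lt_or_ge m 0 with h|h
  · rw [Finset.sum_eq_zero fun s _ => hf s (by omega), Finset.sum_eq_zero fun s _ => hf s (by omega)]
  · apply Finset.sum_subset
    · exact Finset.range_subset_range.mpr (by omega)
    · intro s _ hs
      exact hf s (by simp only [Finset.mem_range] at hs; omega)

lemma GG_ext (r t : ℕ) (m : ℤ) {n : ℕ} (hm : m < (n:ℤ)) :
    GG p N L (r+1) t m = ∑ s ∈ Finset.range n,
      qBinom p (L (r+1) + (t:ℤ)) (s:ℤ) * p ^ ((s:ℤ) * (Msum N L (r+2) - (t:ℤ))) *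
        GG p N L r s (m - (s:ℤ)) := by
  rw [GG_succ]
  exact sum_ext hm fun s hs => by rw [GG_neg r s (by omega : m - (s:ℤ) < 0), mul_zero]

lemma DD_ext (r t : ℕ) (m : ℤ) {n : ℕ} (hm : m < (n:ℤ)) :
    DD p N L (r+1) t m = ∑ s ∈ Finset.range n,
      p ^ (L (r+1) + (t:ℤ) - (s:ℤ) + (s:ℤ) * (Msum N L (r+2) - (t:ℤ))) *
        qBinom p (L (r+1) + (t:ℤ) - 1) ((s:ℤ) - 1) * DD p N L r s (m - (s:ℤ)) := by
  rw [DD_succ]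
  exact sum_ext hm fun s hs => by rw [DD_neg r s (by omega : m - (s:ℤ) < 0), mul_zero]

lemma ZZ_ext (r t : ℕ) (m : ℤ) {n : ℕ} (hm : m < (n:ℤ)) :
    ZZ p N L r t m = ∑ s ∈ Finset.range n,
      qBinom p (L r + (t:ℤ) - 1) (s:ℤ) * p ^ ((s:ℤ) * (Msum N L (r+1) - (t:ℤ))) *
        GG p N L (r-1) (s+1) (m - (s:ℤ)) := by
  rw [ZZ]
  exact sum_ext hm fun s hs => by rw [GG_neg (r-1) (s+1) (by omega : m - (s:ℤ) < 0), mul_zero]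

lemma double_shift (n : ℕ) (f g : ℕ → ℕ → ℂ)
    (hfg : ∀ s u, f s (u+1) = g (s+1) u)
    (hf0 : ∀ s, f s 0 = 0) (hg0 : ∀ u, g 0 u = 0)
    (hgv : ∀ s u, n ≤ s + u → g s u = 0) :
    ∑ s ∈ Finset.range (n+1), ∑ u ∈ Finset.range (n+1), f s u
      = ∑ s ∈ Finset.range (n+1), ∑ u ∈ Finset.range (n+1), g s u := by
  calc ∑ s ∈ Finset.range (n+1), ∑ u ∈ Finset.range (n+1), f s u
      = ∑ s ∈ Finset.range (n+1), ∑ u ∈ Finset.range n, g (s+1) u := by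
        refine Finset.sum_congr rfl fun s _ => ?_
        rw [Finset.sum_range_succ' (fun u => f s u) n, hf0, add_zero]
        exact Finset.sum_congr rfl fun u _ => hfg s u
    _ = ∑ u ∈ Finset.range n, ∑ s ∈ Finset.range (n+1), g (s+1) u := Finset.sum_comm
    _ = ∑ u ∈ Finset.range n, ∑ s ∈ Finset.range (n+2), g s u := by
        refine Finset.sum_congr rfl fun u _ => ?_
        rw [Finset.sum_range_succ' (fun s => g s u) (n+1), hg0, add_zero]
    _ = ∑ u ∈ Finset.range n, ∑ s ∈ Finset.range (n+1), g s u := by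
        refine Finset.sum_congr rfl fun u hu => ?_
        rw [Finset.sum_range_succ, hgv (n+1) u (by omega), add_zero]
    _ = ∑ u ∈ Finset.range (n+1), ∑ s ∈ Finset.range (n+1), g s u := by
        rw [Finset.sum_range_succ _ n, Finset.sum_eq_zero fun s _ => hgv s n (by omega), add_zero]
    _ = ∑ s ∈ Finset.range (n+1), ∑ u ∈ Finset.range (n+1), g s u := Finset.sum_comm


lemma Msum_peel {k : ℕ} (hk : k ≤ N) : Msum N L k = L k + Msum N L (k+1) := by
  have h : Finset.Icc k N = insert k (Finset.Icc (k+1) N) := by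
    ext x; simp only [Finset.mem_Icc, Finset.mem_insert]; omega
  rw [Msum, Msum, h, Finset.sum_insert (by simp only [Finset.mem_Icc]; omega)]

lemma star (hp0 : p ≠ 0) (hq1 : ∀ m : ℕ, 0 < m → p ^ m ≠ 1)
    (r : ℕ) (lam mu : ℤ) (hlm : lam + mu = Msum N L (r+2)) (m : ℤ) (n : ℕ) (hn : m < (n:ℤ)) :
    ∑ s ∈ Finset.range (n+1), qBinom p (lam - 1) (s:ℤ) * p^((s:ℤ)*mu) *
        (GG p N L (r+1) (s+1) (m-(s:ℤ)) - GG p N L (r+1) s (m-(s:ℤ)))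
      = ∑ s ∈ Finset.range (n+1), p^(lam - (s:ℤ) + (s:ℤ)*mu) * qBinom p (lam-1) ((s:ℤ)-1) *
          ZZ p N L (r+1) s (m-(s:ℤ)) := by
  have key : ∀ s : ℕ, GG p N L (r+1) (s+1) (m-(s:ℤ)) - GG p N L (r+1) s (m-(s:ℤ))
      = ∑ u ∈ Finset.range (n+1), qBinom p (L (r+1) + (s:ℤ)) ((u:ℤ)-1) *
          p^((u:ℤ) * (Msum N L (r+2) - (s:ℤ) - 1)) * GG p N L r u (m - (s:ℤ) - (u:ℤ)) := by
    intro s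
    rw [GG_ext r (s+1) (m-(s:ℤ)) (by omega : m - (s:ℤ) < ((n+1 : ℕ):ℤ)),
        GG_ext r s (m-(s:ℤ)) (by omega : m - (s:ℤ) < ((n+1 : ℕ):ℤ)), ← Finset.sum_sub_distrib]
    refine Finset.sum_congr rfl fun u _ => ?_
    rw [pascal₂ hp0 hq1 (L (r+1) + ((s+1 : ℕ):ℤ)) (u:ℤ)]
    push_cast
    rw [show L (r+1) + ((s:ℤ)+1) - 1 = L (r+1) + (s:ℤ) by ring,
        show Msum N L (r+2) - ((s:ℤ)+1) = Msum N L (r+2) - (s:ℤ) - 1 by ring]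
    have comb : p^((u:ℤ)) * p^((u:ℤ) * (Msum N L (r+2) - (s:ℤ) - 1))
        = p^((u:ℤ) * (Msum N L (r+2) - (s:ℤ))) := zpow_helper hp0 _ _ _ (by ring)
    calc (p^((u:ℤ)) * qBinom p (L (r+1) + (s:ℤ)) (u:ℤ) + qBinom p (L (r+1) + (s:ℤ)) ((u:ℤ)-1)) *
            p ^ ((u:ℤ) * (Msum N L (r+2) - (s:ℤ) - 1)) * GG p N L r u (m - (s:ℤ) - (u:ℤ))
          - qBinom p (L (r+1) + (s:ℤ)) (u:ℤ) * p ^ ((u:ℤ) * (Msum N L (r+2) - (s:ℤ))) *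
            GG p N L r u (m - (s:ℤ) - (u:ℤ))
        = (p^((u:ℤ)) * p^((u:ℤ) * (Msum N L (r+2) - (s:ℤ) - 1))) *
            (qBinom p (L (r+1) + (s:ℤ)) (u:ℤ) * GG p N L r u (m - (s:ℤ) - (u:ℤ)))
          + qBinom p (L (r+1) + (s:ℤ)) ((u:ℤ)-1) * p ^ ((u:ℤ) * (Msum N L (r+2) - (s:ℤ) - 1)) *
            GG p N L r u (m - (s:ℤ) - (u:ℤ))
          - qBinom p (L (r+1) + (s:ℤ)) (u:ℤ) * p ^ ((u:ℤ) * (Msum N L (r+2) - (s:ℤ))) *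
            GG p N L r u (m - (s:ℤ) - (u:ℤ)) := by ring
      _ = _ := by rw [comb]; ring
  have lhs_eq : ∑ s ∈ Finset.range (n+1), qBinom p (lam - 1) (s:ℤ) * p^((s:ℤ)*mu) *
        (GG p N L (r+1) (s+1) (m-(s:ℤ)) - GG p N L (r+1) s (m-(s:ℤ)))
      = ∑ s ∈ Finset.range (n+1), ∑ u ∈ Finset.range (n+1),
          qBinom p (lam - 1) (s:ℤ) * qBinom p (L (r+1) + (s:ℤ)) ((u:ℤ)-1) *
            p^((s:ℤ)*mu + (u:ℤ) * (Msum N L (r+2) - (s:ℤ) - 1)) *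
            GG p N L r u (m - (s:ℤ) - (u:ℤ)) := by
    refine Finset.sum_congr rfl fun s _ => ?_
    rw [key s, Finset.mul_sum]
    refine Finset.sum_congr rfl fun u _ => ?_
    rw [← zpow_helper hp0 ((s:ℤ)*mu) ((u:ℤ) * (Msum N L (r+2) - (s:ℤ) - 1)) _ rfl]
    ring
  have rhs_eq : ∑ s ∈ Finset.range (n+1), p^(lam - (s:ℤ) + (s:ℤ)*mu) * qBinom p (lam-1) ((s:ℤ)-1) *
          ZZ p N L (r+1) s (m-(s:ℤ))
      = ∑ s ∈ Finset.range (n+1), ∑ u ∈ Finset.range (n+1),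
          qBinom p (lam - 1) ((s:ℤ)-1) * qBinom p (L (r+1) + (s:ℤ) - 1) (u:ℤ) *
            p^(lam - (s:ℤ) + (s:ℤ)*mu + (u:ℤ) * (Msum N L (r+2) - (s:ℤ))) *
            GG p N L r (u+1) (m - (s:ℤ) - (u:ℤ)) := by
    refine Finset.sum_congr rfl fun s _ => ?_
    rw [ZZ_ext (r+1) s (m-(s:ℤ)) (by omega : m - (s:ℤ) < ((n+1 : ℕ):ℤ))]
    simp only [Nat.add_sub_cancel, show r+1+1 = r+2 by omega]
    rw [Finset.mul_sum]
    refine Finset.sum_congr rfl fun u _ => ?_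
    rw [← zpow_helper hp0 (lam - (s:ℤ) + (s:ℤ)*mu) ((u:ℤ) * (Msum N L (r+2) - (s:ℤ))) _ rfl]
    ring
  rw [lhs_eq, rhs_eq]
  apply double_shift
  · intro s u
    push_cast
    rw [show (u:ℤ) + 1 - 1 = (u:ℤ) by ring,
        show L (r+1) + ((s:ℤ)+1) - 1 = L (r+1) + (s:ℤ) by ring,
        show (s:ℤ) + 1 - 1 = (s:ℤ) by ring,
        show m - (s:ℤ) - ((u:ℤ)+1) = m - ((s:ℤ)+1) - (u:ℤ) by ring,
        show (s:ℤ)*mu + ((u:ℤ)+1) * (Msum N L (r+2) - (s:ℤ) - 1)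
          = lam - ((s:ℤ)+1) + ((s:ℤ)+1)*mu + (u:ℤ) * (Msum N L (r+2) - ((s:ℤ)+1))
          from by linear_combination -hlm]
  · intro s
    rw [show ((0:ℕ):ℤ) - 1 = -1 by norm_num, qBinom_neg (by norm_num : (-1:ℤ) < 0)]
    ring
  · intro u
    rw [show ((0:ℕ):ℤ) - 1 = -1 by norm_num, qBinom_neg (by norm_num : (-1:ℤ) < 0)]
    ring
  · intro s u hsu
    rw [GG_neg r (u+1) (by omega : m - (s:ℤ) - (u:ℤ) < 0), mul_zero]

lemma keyLemma (hp0 : p ≠ 0) (hq1 : ∀ m : ℕ, 0 < m → p ^ m ≠ 1) :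
    ∀ (r : ℕ), r + 2 ≤ N → ∀ (t : ℕ) (m : ℤ),
      GG p N L (r+1) t m = ZZ p N L (r+1) t m + DD p N L (r+1) t m := by
  intro r
  induction r with
  | zero =>
    intro _ t m
    rw [GG_succ, DD_succ, ZZ, ← Finset.sum_add_distrib]
    refine Finset.sum_congr rfl fun s _ => ?_
    rw [pascal₁ hp0 hq1 (L 1 + (t:ℤ)) (s:ℤ)]
    have h1 : GG p N L 0 (s+1) (m - (s:ℤ)) = GG p N L 0 s (m - (s:ℤ)) := rfl
    rw [h1]
    rw [← zpow_helper hp0 (L 1 + (t:ℤ) - (s:ℤ)) ((s:ℤ) * (Msum N L 2 - (t:ℤ))) _ rfl]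
    have h2 : DD p N L 0 s (m - (s:ℤ)) = GG p N L 0 s (m - (s:ℤ)) := rfl
    rw [h2]
    ring
  | succ r ih =>
    intro hrN t m
    have hmn : m < ((m.toNat + 1 + 1 : ℕ):ℤ) := by omega
    rw [GG_ext (r+1) t m hmn]
    simp only [show r+1+1 = r+2 by omega, show r+1+2 = r+3 by omega]
    have split : ∑ s ∈ Finset.range (m.toNat + 1 + 1),
          qBinom p (L (r+2) + (t:ℤ)) (s:ℤ) * p ^ ((s:ℤ) * (Msum N L (r+3) - (t:ℤ))) *
            GG p N L (r+1) s (m - (s:ℤ))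
        = (∑ s ∈ Finset.range (m.toNat + 1 + 1),
            qBinom p (L (r+2) + (t:ℤ) - 1) (s:ℤ) * p ^ ((s:ℤ) * (Msum N L (r+3) - (t:ℤ))) *
              GG p N L (r+1) s (m - (s:ℤ)))
          + ((∑ s ∈ Finset.range (m.toNat + 1 + 1),
              p ^ (L (r+2) + (t:ℤ) - (s:ℤ) + (s:ℤ) * (Msum N L (r+3) - (t:ℤ))) *
                qBinom p (L (r+2) + (t:ℤ) - 1) ((s:ℤ)-1) * ZZ p N L (r+1) s (m - (s:ℤ)))
            + (∑ s ∈ Finset.range (m.toNat + 1 + 1),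
              p ^ (L (r+2) + (t:ℤ) - (s:ℤ) + (s:ℤ) * (Msum N L (r+3) - (t:ℤ))) *
                qBinom p (L (r+2) + (t:ℤ) - 1) ((s:ℤ)-1) * DD p N L (r+1) s (m - (s:ℤ)))) := by
      rw [← Finset.sum_add_distrib, ← Finset.sum_add_distrib]
      refine Finset.sum_congr rfl fun s _ => ?_
      rw [pascal₁ hp0 hq1 (L (r+2) + (t:ℤ)) (s:ℤ), ih (by omega) s (m - (s:ℤ)),
        ← zpow_helper hp0 (L (r+2) + (t:ℤ) - (s:ℤ)) ((s:ℤ) * (Msum N L (r+3) - (t:ℤ))) _ rfl]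
      ring
    rw [split]
    have hB2 : (∑ s ∈ Finset.range (m.toNat + 1 + 1),
              p ^ (L (r+2) + (t:ℤ) - (s:ℤ) + (s:ℤ) * (Msum N L (r+3) - (t:ℤ))) *
                qBinom p (L (r+2) + (t:ℤ) - 1) ((s:ℤ)-1) * DD p N L (r+1) s (m - (s:ℤ)))
        = DD p N L (r+2) t m := by
      have h := DD_ext (r+1) t m hmn (p := p) (N := N) (L := L)
      simp only [show r+1+1 = r+2 by omega, show r+1+2 = r+3 by omega] at h
      exact h.symm
    rw [hB2]
    have hlm' : (L (r+2) + (t:ℤ)) + (Msum N L (r+3) - (t:ℤ)) = Msum N L (r+2) := by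
      rw [Msum_peel (show r+2 ≤ N by omega)]
      simp only [show r+2+1 = r+3 by omega]
      ring
    have hstar := star hp0 hq1 r (L (r+2) + (t:ℤ)) (Msum N L (r+3) - (t:ℤ)) hlm' m
      (m.toNat + 1) (by omega)
    rw [← hstar]
    have hZZ : ZZ p N L (r+2) t m = ∑ s ∈ Finset.range (m.toNat + 1 + 1),
        qBinom p (L (r+2) + (t:ℤ) - 1) (s:ℤ) * p ^ ((s:ℤ) * (Msum N L (r+3) - (t:ℤ))) *
          GG p N L (r+1) (s+1) (m - (s:ℤ)) := by
      have h := ZZ_ext (r+2) t m hmn (p := p) (N := N) (L := L)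
      simp only [Nat.add_sub_cancel, show r+2+1 = r+3 by omega] at h
      exact h
    rw [hZZ, ← add_assoc, ← Finset.sum_add_distrib]
    refine congrArg₂ (· + ·) (Finset.sum_congr rfl fun s _ => by ring) rfl


lemma Msum_empty {k : ℕ} (hk : N < k) : Msum N L k = 0 := by
  rw [Msum, Finset.Icc_eq_empty (by omega)]; rfl

lemma Msum_top : Msum N L N = L N := by
  rw [Msum_peel (le_refl N), Msum_empty (by omega), add_zero]

/-- The main recurrence at the level of `GG`. -/
lemma main (hp0 : p ≠ 0) (hq1 : ∀ m : ℕ, 0 < m → p ^ m ≠ 1) (K : ℕ) (a : ℤ) :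
    GG p (K+2) L (K+2) 0 a
      = (∑ s ∈ Finset.range (a.toNat+1+1),
          qBinom p (L (K+2) - 1) ((s:ℤ)-1) * GG p (K+2) L (K+1) s (a - (s:ℤ)))
        + p^(L (K+2) - 1) * (∑ s ∈ Finset.range (a.toNat+1+1),
          qBinom p (L (K+2) - 2) ((s:ℤ)-1) * DD p (K+2) L (K+1) s (a - (s:ℤ)))
        + ∑ s ∈ Finset.range (a.toNat+1+1),
          p^(s:ℤ) * qBinom p (L (K+2) - 2) (s:ℤ) * GG p (K+2) L (K+1) (s+1) (a - (s:ℤ)) := by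
  have hmn : a < ((a.toNat + 1 + 1 : ℕ):ℤ) := by omega
  have hM0 : Msum (K+2) L (K+3) = 0 := Msum_empty (by omega)
  have E0 : GG p (K+2) L (K+2) 0 a
      = (∑ s ∈ Finset.range (a.toNat+1+1),
          qBinom p (L (K+2) - 1) ((s:ℤ)-1) * GG p (K+2) L (K+1) s (a - (s:ℤ)))
        + ((∑ s ∈ Finset.range (a.toNat+1+1),
          p^(s:ℤ) * qBinom p (L (K+2) - 2) (s:ℤ) * GG p (K+2) L (K+1) s (a - (s:ℤ)))
        + ((∑ s ∈ Finset.range (a.toNat+1+1),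
          p^(L (K+2) - 1) * (qBinom p (L (K+2) - 2) ((s:ℤ)-1) * ZZ p (K+2) L (K+1) s (a - (s:ℤ))))
        + (∑ s ∈ Finset.range (a.toNat+1+1),
          p^(L (K+2) - 1) * (qBinom p (L (K+2) - 2) ((s:ℤ)-1) * DD p (K+2) L (K+1) s (a - (s:ℤ)))))) := by
    rw [GG_ext (K+1) 0 a hmn]
    simp only [show K+1+1 = K+2 by omega, show K+1+2 = K+3 by omega, Nat.cast_zero, add_zero,
      sub_zero, hM0]
    rw [← Finset.sum_add_distrib, ← Finset.sum_add_distrib, ← Finset.sum_add_distrib]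
    refine Finset.sum_congr rfl fun s _ => ?_
    have P2 := pascal₂ hp0 hq1 (L (K+2)) (s:ℤ)
    have P1 := pascal₁ hp0 hq1 (L (K+2) - 1) (s:ℤ)
    rw [show L (K+2) - 1 - 1 = L (K+2) - 2 by ring] at P1
    have KL := keyLemma (N := K+2) (L := L) hp0 hq1 K (by omega) s (a - (s:ℤ))
    have ZH : p^((s:ℤ)) * p^(L (K+2) - 1 - (s:ℤ)) = p^(L (K+2) - 1) :=
      zpow_helper hp0 _ _ _ (by ring)
    rw [mul_zero, zpow_zero, mul_one]
    linear_combination (GG p (K+2) L (K+1) s (a - (s:ℤ))) * P2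
      + (p^((s:ℤ)) * GG p (K+2) L (K+1) s (a - (s:ℤ))) * P1
      + (qBinom p (L (K+2) - 2) ((s:ℤ)-1) * GG p (K+2) L (K+1) s (a - (s:ℤ))) * ZH
      + (p^(L (K+2) - 1) * qBinom p (L (K+2) - 2) ((s:ℤ)-1)) * KL
  have hlm : (L (K+2) - 1) + 1 = Msum (K+2) L (K+2) := by
    rw [Msum_top]; ring
  have hstar := star hp0 hq1 K (L (K+2) - 1) 1 hlm a (a.toNat + 1) (by omega)
  have hstar' : (∑ s ∈ Finset.range (a.toNat+1+1),
        p^(s:ℤ) * qBinom p (L (K+2) - 2) (s:ℤ) * GG p (K+2) L (K+1) (s+1) (a - (s:ℤ)))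
      - (∑ s ∈ Finset.range (a.toNat+1+1),
        p^(s:ℤ) * qBinom p (L (K+2) - 2) (s:ℤ) * GG p (K+2) L (K+1) s (a - (s:ℤ)))
      = ∑ s ∈ Finset.range (a.toNat+1+1),
          p^(L (K+2) - 1) * (qBinom p (L (K+2) - 2) ((s:ℤ)-1) * ZZ p (K+2) L (K+1) s (a - (s:ℤ))) := by
    rw [← Finset.sum_sub_distrib]
    calc ∑ s ∈ Finset.range (a.toNat+1+1),
          (p^(s:ℤ) * qBinom p (L (K+2) - 2) (s:ℤ) * GG p (K+2) L (K+1) (s+1) (a - (s:ℤ))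
            - p^(s:ℤ) * qBinom p (L (K+2) - 2) (s:ℤ) * GG p (K+2) L (K+1) s (a - (s:ℤ)))
        = ∑ s ∈ Finset.range (a.toNat+1+1), qBinom p (L (K+2) - 1 - 1) (s:ℤ) * p^((s:ℤ)*1) *
            (GG p (K+2) L (K+1) (s+1) (a-(s:ℤ)) - GG p (K+2) L (K+1) s (a-(s:ℤ))) := by
          refine Finset.sum_congr rfl fun s _ => ?_
          rw [show L (K+2) - 1 - 1 = L (K+2) - 2 by ring, show (s:ℤ)*1 = (s:ℤ) by ring]
          ring
      _ = ∑ s ∈ Finset.range (a.toNat+1+1), p^(L (K+2) - 1 - (s:ℤ) + (s:ℤ)*1) *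
            qBinom p (L (K+2) - 1 - 1) ((s:ℤ)-1) * ZZ p (K+2) L (K+1) s (a-(s:ℤ)) := hstar
      _ = _ := by
          refine Finset.sum_congr rfl fun s _ => ?_
          rw [show L (K+2) - 1 - (s:ℤ) + (s:ℤ)*1 = L (K+2) - 1 by ring,
            show L (K+2) - 1 - 1 = L (K+2) - 2 by ring]
          ring
  rw [Finset.mul_sum]
  linear_combination E0 - hstar'

/-- Congruence/shift lemma for `GG` under modification of `L` above level `r`. -/
lemma GG_shift (hp0 : p ≠ 0) (d : ℤ) {L₂ : ℕ → ℤ} :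
    ∀ (r : ℕ), (∀ k, 1 ≤ k → k ≤ r → L k = L₂ k) →
      (∀ k, 2 ≤ k → k ≤ r+1 → Msum N L k = Msum N L₂ k - d) →
    ∀ (t : ℕ) (m : ℤ), GG p N L r t m = p^(-(d*m)) * GG p N L₂ r t m := by
  intro r
  induction r with
  | zero =>
    intro _ _ t m
    rw [GG_zero, GG_zero]
    by_cases h : m = 0
    · simp [h]
    · simp [h]
  | succ r ih =>
    intro hLk hMk t m
    rw [GG_succ, GG_succ, Finset.mul_sum]
    refine Finset.sum_congr rfl fun s _ => ?_
    rw [ih (fun k h1 h2 => hLk k h1 (by omega)) (fun k h1 h2 => hMk k h1 (by omega)) s (m - (s:ℤ)),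
      hLk (r+1) (by omega) (by omega), hMk (r+2) (by omega) (by omega)]
    have comb : p ^ ((s:ℤ) * (Msum N L₂ (r+2) - d - (t:ℤ))) * p ^ (-(d * (m - (s:ℤ))))
        = p ^ (-(d*m)) * p ^ ((s:ℤ) * (Msum N L₂ (r+2) - (t:ℤ))) := by
      rw [zpow_helper hp0 _ _ ((s:ℤ) * (Msum N L₂ (r+2) - d - (t:ℤ)) + -(d * (m - (s:ℤ)))) rfl,
        zpow_helper hp0 (-(d*m)) _ (-(d*m) + (s:ℤ) * (Msum N L₂ (r+2) - (t:ℤ))) rfl,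
        show (s:ℤ) * (Msum N L₂ (r+2) - d - (t:ℤ)) + -(d * (m - (s:ℤ)))
          = -(d*m) + (s:ℤ) * (Msum N L₂ (r+2) - (t:ℤ)) by ring]
    calc qBinom p (L₂ (r+1) + (t:ℤ)) (s:ℤ) * p ^ ((s:ℤ) * (Msum N L₂ (r+2) - d - (t:ℤ))) *
          (p ^ (-(d * (m - (s:ℤ)))) * GG p N L₂ r s (m - (s:ℤ)))
        = (p ^ ((s:ℤ) * (Msum N L₂ (r+2) - d - (t:ℤ))) * p ^ (-(d * (m - (s:ℤ))))) *
            (qBinom p (L₂ (r+1) + (t:ℤ)) (s:ℤ) * GG p N L₂ r s (m - (s:ℤ))) := by ring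
      _ = _ := by rw [comb]; ring

lemma sum_uvec (n : ℕ) (s : Finset ℕ) : ∑ i ∈ s, uvecZ n i = if n ∈ s then 1 else 0 := by
  rw [← Finset.sum_ite_eq' s n (fun _ => (1:ℤ))]
  exact Finset.sum_congr rfl fun i _ => by simp [uvecZ]

section Mods
variable (K : ℕ)

lemma Msum_L' {k : ℕ} (hk : k ≤ K+1) :
    Msum (K+2) (fun i => L i + uvecZ (K+1) i - uvecZ (K+2) i) k = Msum (K+2) L k := by
  rw [Msum, Msum]
  rw [Finset.sum_sub_distrib, Finset.sum_add_distrib, sum_uvec, sum_uvec,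
    if_pos (by simp only [Finset.mem_Icc]; omega), if_pos (by simp only [Finset.mem_Icc]; omega)]
  ring

lemma Msum_L3 {k : ℕ} (hk : k ≤ K+1) :
    Msum (K+2) (fun i => L i + uvecZ (K+1) i - 2 * uvecZ (K+2) i) k = Msum (K+2) L k - 1 := by
  rw [Msum, Msum]
  rw [Finset.sum_sub_distrib, Finset.sum_add_distrib, ← Finset.mul_sum, sum_uvec, sum_uvec,
    if_pos (by simp only [Finset.mem_Icc]; omega), if_pos (by simp only [Finset.mem_Icc]; omega)]
  ring

lemma Msum_L2 {k : ℕ} (hk : k ≤ K+2) :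
    Msum (K+2) (fun i => L i - 2 * uvecZ (K+2) i) k = Msum (K+2) L k - 2 := by
  rw [Msum, Msum]
  rw [Finset.sum_sub_distrib, ← Finset.mul_sum, sum_uvec,
    if_pos (by simp only [Finset.mem_Icc]; omega)]
  ring

lemma Msum_L'_top :
    Msum (K+2) (fun i => L i + uvecZ (K+1) i - uvecZ (K+2) i) (K+2) = Msum (K+2) L (K+2) - 1 := by
  rw [Msum, Msum, Finset.sum_sub_distrib, Finset.sum_add_distrib, sum_uvec, sum_uvec,
    if_neg (by simp only [Finset.mem_Icc]; omega), if_pos (by simp only [Finset.mem_Icc]; omega)]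
  ring

lemma Msum_L3_top :
    Msum (K+2) (fun i => L i + uvecZ (K+1) i - 2 * uvecZ (K+2) i) (K+2) = Msum (K+2) L (K+2) - 2 := by
  rw [Msum, Msum, Finset.sum_sub_distrib, Finset.sum_add_distrib, ← Finset.mul_sum, sum_uvec, sum_uvec,
    if_neg (by simp only [Finset.mem_Icc]; omega), if_pos (by simp only [Finset.mem_Icc]; omega)]
  ring

lemma GGL' (hp0 : p ≠ 0) (s : ℕ) (m : ℤ) :
    GG p (K+2) (fun i => L i + uvecZ (K+1) i - uvecZ (K+2) i) (K+1) s m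
      = GG p (K+2) L (K+1) (s+1) m := by
  rw [GG_succ, GG_succ]
  refine Finset.sum_congr rfl fun u _ => ?_
  have hGG : GG p (K+2) (fun i => L i + uvecZ (K+1) i - uvecZ (K+2) i) K u (m - (u:ℤ))
      = GG p (K+2) L K u (m - (u:ℤ)) := by
    have h := GG_shift (L := fun i => L i + uvecZ (K+1) i - uvecZ (K+2) i) (L₂ := L) hp0 0 K
      (fun k h1 h2 => by simp only [uvecZ]; split_ifs <;> omega)
      (fun k h1 h2 => by rw [Msum_L' K (by omega)]; ring) u (m - (u:ℤ))
    simpa using h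
  have e1 : L (K+1) + uvecZ (K+1) (K+1) - uvecZ (K+2) (K+1) = L (K+1) + 1 := by
    simp only [uvecZ]; split_ifs <;> omega
  rw [hGG, e1, show K+1+1 = K+2 by omega, Msum_L'_top K]
  push_cast
  rw [show L (K+1) + 1 + (s:ℤ) = L (K+1) + ((s:ℤ)+1) by ring,
    show Msum (K+2) L (K+2) - 1 - (s:ℤ) = Msum (K+2) L (K+2) - ((s:ℤ)+1) by ring]

lemma GGL3 (hp0 : p ≠ 0) (s : ℕ) (m : ℤ) :
    GG p (K+2) (fun i => L i + uvecZ (K+1) i - 2 * uvecZ (K+2) i) (K+1) s m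
      = p^(-m) * GG p (K+2) L (K+1) (s+1) m := by
  rw [GG_succ, GG_succ, Finset.mul_sum]
  refine Finset.sum_congr rfl fun u _ => ?_
  have hGG : GG p (K+2) (fun i => L i + uvecZ (K+1) i - 2 * uvecZ (K+2) i) K u (m - (u:ℤ))
      = p^(-(1 * (m - (u:ℤ)))) * GG p (K+2) L K u (m - (u:ℤ)) :=
    GG_shift (L₂ := L) hp0 1 K
      (fun k h1 h2 => by simp only [uvecZ]; split_ifs <;> omega)
      (fun k h1 h2 => by rw [Msum_L3 K (by omega)]) u (m - (u:ℤ))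
  have e1 : L (K+1) + uvecZ (K+1) (K+1) - 2 * uvecZ (K+2) (K+1) = L (K+1) + 1 := by
    simp only [uvecZ]; split_ifs <;> omega
  rw [hGG, e1, show K+1+1 = K+2 by omega, Msum_L3_top K]
  push_cast
  rw [show L (K+1) + 1 + (s:ℤ) = L (K+1) + ((s:ℤ)+1) by ring]
  have comb : p ^ ((u:ℤ) * (Msum (K+2) L (K+2) - 2 - (s:ℤ))) * p ^ (-(1 * (m - (u:ℤ))))
      = p ^ (-m) * p ^ ((u:ℤ) * (Msum (K+2) L (K+2) - ((s:ℤ)+1))) := by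
    rw [zpow_helper hp0 _ _ ((u:ℤ) * (Msum (K+2) L (K+2) - 2 - (s:ℤ)) + -(1 * (m - (u:ℤ)))) rfl,
      zpow_helper hp0 (-m) _ (-m + (u:ℤ) * (Msum (K+2) L (K+2) - ((s:ℤ)+1))) rfl,
      show (u:ℤ) * (Msum (K+2) L (K+2) - 2 - (s:ℤ)) + -(1 * (m - (u:ℤ)))
        = -m + (u:ℤ) * (Msum (K+2) L (K+2) - ((s:ℤ)+1)) by ring]
  calc qBinom p (L (K+1) + ((s:ℤ)+1)) (u:ℤ) * p ^ ((u:ℤ) * (Msum (K+2) L (K+2) - 2 - (s:ℤ))) *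
        (p ^ (-(1 * (m - (u:ℤ)))) * GG p (K+2) L K u (m - (u:ℤ)))
      = (p ^ ((u:ℤ) * (Msum (K+2) L (K+2) - 2 - (s:ℤ))) * p ^ (-(1 * (m - (u:ℤ))))) *
          (qBinom p (L (K+1) + ((s:ℤ)+1)) (u:ℤ) * GG p (K+2) L K u (m - (u:ℤ))) := by ring
    _ = _ := by rw [comb]; ring

def gam (K : ℕ) (L : ℕ → ℤ) (r : ℕ) : ℤ := (∑ k ∈ Finset.Icc 1 r, Msum (K+2) L k) - (r:ℤ)

lemma gam_succ (r : ℕ) : gam K L (r+1) = gam K L r + Msum (K+2) L (r+1) - 1 := by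
  rw [gam, gam, Finset.sum_Icc_succ_top (by omega : 1 ≤ r+1)]
  push_cast; ring

lemma DD_GG2 (hp0 : p ≠ 0) : ∀ r, r ≤ K+1 → ∀ (t : ℕ) (m : ℤ),
    DD p (K+2) L r (t+1) m
      = p^(gam K L r) * GG p (K+2) (fun i => L i - 2 * uvecZ (K+2) i) r t (m - (r:ℤ)) := by
  intro r
  induction r with
  | zero =>
    intro _ t m
    rw [DD_zero, GG_zero, gam]
    simp
  | succ r ih =>
    intro hr t m
    rcases lt_or_ge m 0 with hm|hm
    · rw [DD_neg (r+1) (t+1) hm, GG_neg (r+1) t (by omega : m - ((r+1:ℕ):ℤ) < 0), mul_zero]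
    · rw [DD_succ, Finset.sum_range_succ']
      have hzero : p ^ (L (r+1) + ((t+1:ℕ):ℤ) - ((0:ℕ):ℤ) + ((0:ℕ):ℤ) * (Msum (K+2) L (r+2) - ((t+1:ℕ):ℤ))) *
          qBinom p (L (r+1) + ((t+1:ℕ):ℤ) - 1) (((0:ℕ):ℤ) - 1) * DD p (K+2) L r 0 (m - ((0:ℕ):ℤ)) = 0 := by
        rw [show ((0:ℕ):ℤ) - 1 = -1 by norm_num, qBinom_neg (by norm_num : (-1:ℤ) < 0)]
        ring
      rw [hzero, add_zero]
      rw [GG_ext r t (m - ((r+1:ℕ):ℤ)) (by omega : m - ((r+1:ℕ):ℤ) < ((m.toNat:ℕ):ℤ)), Finset.mul_sum]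
      refine Finset.sum_congr rfl fun s _ => ?_
      rw [ih (by omega) s (m - ((s+1:ℕ):ℤ))]
      have e1 : L (r+1) - 2 * uvecZ (K+2) (r+1) = L (r+1) := by
        simp only [uvecZ]; split_ifs <;> omega
      rw [e1, Msum_L2 (L := L) K (by omega : r+2 ≤ K+2)]
      have harg : m - ((s+1:ℕ):ℤ) - (r:ℤ) = m - ((r+1:ℕ):ℤ) - (s:ℤ) := by push_cast; ring
      rw [harg]
      have comb : p ^ (L (r+1) + ((t+1:ℕ):ℤ) - ((s+1:ℕ):ℤ) + ((s+1:ℕ):ℤ) * (Msum (K+2) L (r+2) - ((t+1:ℕ):ℤ))) *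
            p ^ (gam K L r)
          = p ^ (gam K L (r+1)) * p ^ ((s:ℤ) * (Msum (K+2) L (r+2) - 2 - (t:ℤ))) := by
        rw [zpow_helper hp0 _ _ (L (r+1) + ((t+1:ℕ):ℤ) - ((s+1:ℕ):ℤ) + ((s+1:ℕ):ℤ) * (Msum (K+2) L (r+2) - ((t+1:ℕ):ℤ)) + gam K L r) rfl,
          zpow_helper hp0 _ _ (gam K L (r+1) + (s:ℤ) * (Msum (K+2) L (r+2) - 2 - (t:ℤ))) rfl,
          gam_succ, Msum_peel (by omega : r+1 ≤ K+2)]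
        push_cast
        rw [show L (r+1) + ((t:ℤ)+1) - ((s:ℤ)+1) + (((s:ℤ)+1)) * (Msum (K+2) L (r+2) - ((t:ℤ)+1)) + gam K L r
          = gam K L r + (L (r+1) + Msum (K+2) L (r+1+1)) - 1 + (s:ℤ) * (Msum (K+2) L (r+2) - 2 - (t:ℤ)) from by
            simp only [show r+1+1 = r+2 by omega]; ring]
      have hq : qBinom p (L (r+1) + ((t+1:ℕ):ℤ) - 1) (((s+1:ℕ):ℤ) - 1) = qBinom p (L (r+1) + (t:ℤ)) (s:ℤ) := by
        push_cast
        rw [show L (r+1) + ((t:ℤ)+1) - 1 = L (r+1) + (t:ℤ) by ring, show (s:ℤ)+1-1 = (s:ℤ) by ring]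
      rw [hq]
      calc p ^ (L (r+1) + ((t+1:ℕ):ℤ) - ((s+1:ℕ):ℤ) + ((s+1:ℕ):ℤ) * (Msum (K+2) L (r+2) - ((t+1:ℕ):ℤ))) *
            qBinom p (L (r+1) + (t:ℤ)) (s:ℤ) *
            (p ^ (gam K L r) * GG p (K+2) (fun i => L i - 2 * uvecZ (K+2) i) r s (m - ((r+1:ℕ):ℤ) - (s:ℤ)))
          = (p ^ (L (r+1) + ((t+1:ℕ):ℤ) - ((s+1:ℕ):ℤ) + ((s+1:ℕ):ℤ) * (Msum (K+2) L (r+2) - ((t+1:ℕ):ℤ))) *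
              p ^ (gam K L r)) *
              (qBinom p (L (r+1) + (t:ℤ)) (s:ℤ) * GG p (K+2) (fun i => L i - 2 * uvecZ (K+2) i) r s (m - ((r+1:ℕ):ℤ) - (s:ℤ))) := by
            ring
        _ = _ := by rw [comb]; ring


lemma T1lemma (hp0 : p ≠ 0) (a : ℤ) :
    GG p (K+2) (fun i => L i + uvecZ (K+1) i - uvecZ (K+2) i) (K+2) 0 (a-1)
      = ∑ s ∈ Finset.range (a.toNat+1+1),
          qBinom p (L (K+2) - 1) ((s:ℤ)-1) * GG p (K+2) L (K+1) s (a - (s:ℤ)) := by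
  rw [GG_ext (K+1) 0 (a-1) (by omega : a - 1 < ((a.toNat+1 : ℕ):ℤ))]
  rw [Finset.sum_range_succ' (fun s => qBinom p (L (K+2) - 1) ((s:ℤ)-1) * GG p (K+2) L (K+1) s (a - (s:ℤ))) (a.toNat+1)]
  have h0 : qBinom p (L (K+2) - 1) (((0:ℕ):ℤ)-1) * GG p (K+2) L (K+1) 0 (a - ((0:ℕ):ℤ)) = 0 := by
    rw [show ((0:ℕ):ℤ) - 1 = -1 by norm_num, qBinom_neg (by norm_num : (-1:ℤ) < 0), zero_mul]
  rw [h0, add_zero]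
  refine Finset.sum_congr rfl fun s _ => ?_
  have e1 : L (K+2) + uvecZ (K+1) (K+2) - uvecZ (K+2) (K+2) + ((0:ℕ):ℤ) = L (K+2) - 1 := by
    simp only [uvecZ]; split_ifs <;> omega
  have hM0 : Msum (K+2) (fun i => L i + uvecZ (K+1) i - uvecZ (K+2) i) (K+1+2) = 0 :=
    Msum_empty (by omega)
  rw [e1, hM0, GGL' K hp0]
  have e2 : (s:ℤ) * (0 - ((0:ℕ):ℤ)) = 0 := by push_cast; ring
  rw [e2, zpow_zero, mul_one]
  have e3 : a - 1 - (s:ℤ) = a - ((s+1:ℕ):ℤ) := by push_cast; ring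
  have e4 : ((s+1:ℕ):ℤ) - 1 = (s:ℤ) := by push_cast; ring
  rw [e3, e4]

lemma T3lemma (hp0 : p ≠ 0) (a : ℤ) :
    ∑ s ∈ Finset.range (a.toNat+1+1),
        p^(s:ℤ) * qBinom p (L (K+2) - 2) (s:ℤ) * GG p (K+2) L (K+1) (s+1) (a - (s:ℤ))
      = p^a * GG p (K+2) (fun i => L i + uvecZ (K+1) i - 2 * uvecZ (K+2) i) (K+2) 0 a := by
  rw [GG_ext (K+1) 0 a (by omega : a < ((a.toNat+1+1 : ℕ):ℤ)), Finset.mul_sum]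
  refine Finset.sum_congr rfl fun s _ => ?_
  have e1 : L (K+2) + uvecZ (K+1) (K+2) - 2 * uvecZ (K+2) (K+2) + ((0:ℕ):ℤ) = L (K+2) - 2 := by
    simp only [uvecZ]; split_ifs <;> omega
  have hM0 : Msum (K+2) (fun i => L i + uvecZ (K+1) i - 2 * uvecZ (K+2) i) (K+1+2) = 0 :=
    Msum_empty (by omega)
  rw [e1, hM0, GGL3 K hp0]
  have e2 : (s:ℤ) * (0 - ((0:ℕ):ℤ)) = 0 := by push_cast; ring
  rw [e2, zpow_zero, mul_one]
  have comb : p^a * p^(-(a - (s:ℤ))) = p^((s:ℤ)) := zpow_helper hp0 _ _ _ (by ring)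
  calc p^(s:ℤ) * qBinom p (L (K+2) - 2) (s:ℤ) * GG p (K+2) L (K+1) (s+1) (a - (s:ℤ))
      = (p^(s:ℤ)) * (qBinom p (L (K+2) - 2) (s:ℤ) * GG p (K+2) L (K+1) (s+1) (a - (s:ℤ))) := by ring
    _ = (p^a * p^(-(a - (s:ℤ)))) * (qBinom p (L (K+2) - 2) (s:ℤ) * GG p (K+2) L (K+1) (s+1) (a - (s:ℤ))) := by
        rw [comb]
    _ = _ := by ring

lemma T2lemma (hp0 : p ≠ 0) (a : ℤ) :
    p^(L (K+2) - 1) * ∑ s ∈ Finset.range (a.toNat+1+1),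
        qBinom p (L (K+2) - 2) ((s:ℤ)-1) * DD p (K+2) L (K+1) s (a - (s:ℤ))
      = p^(gam K L (K+1) + L (K+2) - 1) *
          GG p (K+2) (fun i => L i - 2 * uvecZ (K+2) i) (K+2) 0 (a - ((K+2:ℕ):ℤ)) := by
  rw [Finset.sum_range_succ' (fun s => qBinom p (L (K+2) - 2) ((s:ℤ)-1) * DD p (K+2) L (K+1) s (a - (s:ℤ))) (a.toNat+1)]
  have h0 : qBinom p (L (K+2) - 2) (((0:ℕ):ℤ)-1) * DD p (K+2) L (K+1) 0 (a - ((0:ℕ):ℤ)) = 0 := by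
    rw [show ((0:ℕ):ℤ) - 1 = -1 by norm_num, qBinom_neg (by norm_num : (-1:ℤ) < 0), zero_mul]
  rw [h0, add_zero]
  rw [GG_ext (K+1) 0 (a - ((K+2:ℕ):ℤ)) (by omega : a - ((K+2:ℕ):ℤ) < ((a.toNat+1 : ℕ):ℤ)),
    Finset.mul_sum, Finset.mul_sum]
  refine Finset.sum_congr rfl fun s _ => ?_
  rw [DD_GG2 K hp0 (K+1) (le_refl (K+1)) s (a - ((s+1:ℕ):ℤ))]
  have e1 : L (K+2) - 2 * uvecZ (K+2) (K+2) + ((0:ℕ):ℤ) = L (K+2) - 2 := by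
    simp only [uvecZ]; split_ifs <;> omega
  have hM0 : Msum (K+2) (fun i => L i - 2 * uvecZ (K+2) i) (K+1+2) = 0 :=
    Msum_empty (by omega)
  rw [e1, hM0]
  have e2 : (s:ℤ) * (0 - ((0:ℕ):ℤ)) = 0 := by push_cast; ring
  rw [e2, zpow_zero, mul_one]
  have e3 : ((s+1:ℕ):ℤ) - 1 = (s:ℤ) := by push_cast; ring
  have e4 : a - ((s+1:ℕ):ℤ) - ((K+1:ℕ):ℤ) = a - ((K+2:ℕ):ℤ) - (s:ℤ) := by push_cast; ring
  rw [e3, e4]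
  have comb : p^(L (K+2) - 1) * p^(gam K L (K+1)) = p^(gam K L (K+1) + L (K+2) - 1) :=
    zpow_helper hp0 _ _ _ (by ring)
  calc p^(L (K+2) - 1) * (qBinom p (L (K+2) - 2) (s:ℤ) *
        (p^(gam K L (K+1)) * GG p (K+2) (fun i => L i - 2 * uvecZ (K+2) i) (K+1) s (a - ((K+2:ℕ):ℤ) - (s:ℤ))))
      = (p^(L (K+2) - 1) * p^(gam K L (K+1))) * (qBinom p (L (K+2) - 2) (s:ℤ) *
          GG p (K+2) (fun i => L i - 2 * uvecZ (K+2) i) (K+1) s (a - ((K+2:ℕ):ℤ) - (s:ℤ))) := by ring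
    _ = _ := by rw [comb]

lemma GG_rec (hp0 : p ≠ 0) (hq1 : ∀ m : ℕ, 0 < m → p ^ m ≠ 1) (a : ℤ) :
    GG p (K+2) L (K+2) 0 a
      = GG p (K+2) (fun i => L i + uvecZ (K+1) i - uvecZ (K+2) i) (K+2) 0 (a-1)
        + p^(gam K L (K+1) + L (K+2) - 1) *
            GG p (K+2) (fun i => L i - 2 * uvecZ (K+2) i) (K+2) 0 (a - ((K+2:ℕ):ℤ))
        + p^a * GG p (K+2) (fun i => L i + uvecZ (K+1) i - 2 * uvecZ (K+2) i) (K+2) 0 a := by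
  rw [main hp0 hq1 K a, T1lemma K hp0 a, T2lemma K hp0 a, T3lemma K hp0 a]

end Mods

/-- Finite set of admissible index tuples. -/
def Jset : ℕ → ℕ → Finset (ℕ → ℕ)
  | 0, m => if m = 0 then {fun _ => 0} else ∅
  | r+1, m => (Finset.range (m+1)).biUnion fun s =>
      (Jset r (m-s)).image fun j => Function.update j (r+1) s

lemma Jset_zero (m : ℕ) : Jset 0 m = if m = 0 then {fun _ => 0} else ∅ := rfl
lemma Jset_succ (r m : ℕ) : Jset (r+1) m = (Finset.range (m+1)).biUnion fun s =>
      (Jset r (m-s)).image fun j => Function.update j (r+1) s := rfl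

lemma mem_Jset : ∀ (r m : ℕ) (j : ℕ → ℕ), j ∈ Jset r m ↔
    ((∀ k, (k = 0 ∨ r < k) → j k = 0) ∧ ∑ k ∈ Finset.Icc 1 r, j k = m) := by
  intro r
  induction r with
  | zero =>
    intro m j
    rw [Jset_zero]
    by_cases hm : m = 0
    · rw [if_pos hm, Finset.mem_singleton]
      subst hm
      constructor
      · rintro rfl
        exact ⟨fun k _ => rfl, by simp⟩
      · rintro ⟨h1, _⟩
        funext k
        exact h1 k (by omega)
    · rw [if_neg hm]
      simp only [Finset.notMem_empty, false_iff, not_and]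
      intro _
      rw [show (∑ k ∈ Finset.Icc 1 0, j k) = 0 from by simp]
      omega
  | succ r ih =>
    intro m j
    rw [Jset_succ]
    simp only [Finset.mem_biUnion, Finset.mem_range, Finset.mem_image]
    constructor
    · rintro ⟨s, hs, j₀, hj₀, rfl⟩
      obtain ⟨hsup, hsum⟩ := (ih _ j₀).mp hj₀
      constructor
      · intro k hk
        have hk' : ¬ k = r + 1 := by omega
        rw [Function.update_of_ne hk']
        exact hsup k (by omega)
      · rw [Finset.sum_Icc_succ_top (by omega : 1 ≤ r+1), Function.update_self]
        have : ∀ k ∈ Finset.Icc 1 r, Function.update j₀ (r+1) s k = j₀ k := by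
          intro k hk
          simp only [Finset.mem_Icc] at hk
          exact Function.update_of_ne (by omega) _ _
        rw [Finset.sum_congr rfl this, hsum]
        omega
    · rintro ⟨hsup, hsum⟩
      refine ⟨j (r+1), ?_, Function.update j (r+1) 0, ?_, ?_⟩
      · have h5 : j (r+1) ≤ ∑ k ∈ Finset.Icc 1 (r+1), j k :=
          Finset.single_le_sum (f := fun k => j k) (fun _ _ => Nat.zero_le _)
            (by simp only [Finset.mem_Icc]; omega)
        rw [hsum] at h5
        omega
      · rw [ih]
        constructor
        · intro k hk
          by_cases hk' : k = r + 1
          · subst hk'; exact Function.update_self _ _ _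
          · rw [Function.update_of_ne hk']
            exact hsup k (by omega)
        · have h1 : ∀ k ∈ Finset.Icc 1 r, Function.update j (r+1) 0 k = j k := by
            intro k hk
            simp only [Finset.mem_Icc] at hk
            exact Function.update_of_ne (by omega) _ _
          rw [Finset.sum_congr rfl h1]
          have h2 : ∑ k ∈ Finset.Icc 1 (r+1), j k = ∑ k ∈ Finset.Icc 1 r, j k + j (r+1) :=
            Finset.sum_Icc_succ_top (by omega) _
          have h3 : ∑ k ∈ Finset.Icc 1 r, j k + j (r+1) = m := by rw [← h2, hsum]
          show (∑ k ∈ Finset.Icc 1 r, j k) = m - j (r+1)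
          omega
      · funext k
        by_cases hk : k = r + 1
        · subst hk
          rw [Function.update_self]
        · rw [Function.update_of_ne hk, Function.update_of_ne hk]

lemma Jset_sum_split (r m : ℕ) (F : (ℕ → ℕ) → ℂ) :
    ∑ j ∈ Jset (r+1) m, F j
      = ∑ s ∈ Finset.range (m+1), ∑ j ∈ Jset r (m-s), F (Function.update j (r+1) s) := by
  rw [Jset_succ, Finset.sum_biUnion]
  · refine Finset.sum_congr rfl fun s _ => ?_
    refine Finset.sum_image ?_
    intro x hx y hy hxy
    obtain ⟨hxs, -⟩ := (mem_Jset _ _ x).mp hx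
    obtain ⟨hys, -⟩ := (mem_Jset _ _ y).mp hy
    funext k
    by_cases hk : k = r + 1
    · subst hk
      rw [hxs (r+1) (by omega), hys (r+1) (by omega)]
    · have := congrFun hxy k
      beta_reduce at this
      rwa [Function.update_of_ne hk, Function.update_of_ne hk] at this
  · intro s₁ _ s₂ _ hne
    simp only [Function.onFun]
    rw [Finset.disjoint_left]
    intro j hj1 hj2
    simp only [Finset.mem_image] at hj1 hj2
    obtain ⟨x, -, hx⟩ := hj1
    obtain ⟨y, -, hy⟩ := hj2
    apply hne
    calc s₁ = j (r+1) := by rw [← hx, Function.update_self]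
      _ = s₂ := by rw [← hy, Function.update_self]

/-- The weight whose sum over `Jset r m` is `GG r t m`. -/
def wgt (p : ℂ) (N : ℕ) (L : ℕ → ℤ) (r t : ℕ) (j : ℕ → ℕ) : ℂ :=
  p ^ (∑ k ∈ Finset.Icc 1 r,
        (j k : ℤ) * (Msum N L (k+1) - ((Function.update j (r+1) t (k+1) : ℕ) : ℤ)))
    * ∏ k ∈ Finset.Icc 1 r, qBinom p (L k + ((Function.update j (r+1) t (k+1) : ℕ):ℤ)) ((j k : ℤ))

lemma wgt_split (hp0 : p ≠ 0) (r t s : ℕ) (j : ℕ → ℕ)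
    (h0 : ∀ k, (k = 0 ∨ r < k) → j k = 0) :
    wgt p N L (r+1) t (Function.update j (r+1) s)
      = qBinom p (L (r+1) + (t:ℤ)) (s:ℤ) * p^((s:ℤ)*(Msum N L (r+2) - (t:ℤ)))
          * wgt p N L r s j := by
  rw [wgt, wgt, Finset.sum_Icc_succ_top (by omega : 1 ≤ r+1),
    Finset.prod_Icc_succ_top (by omega : 1 ≤ r+1)]
  have hval : ∀ k ∈ Finset.Icc 1 r,
      Function.update (Function.update j (r+1) s) (r+1+1) t (k+1)
        = Function.update j (r+1) s (k+1) := by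
    intro k hk
    simp only [Finset.mem_Icc] at hk
    exact Function.update_of_ne (by omega) _ _
  have hjk : ∀ k ∈ Finset.Icc 1 r, Function.update j (r+1) s k = j k := by
    intro k hk
    simp only [Finset.mem_Icc] at hk
    exact Function.update_of_ne (by omega) _ _
  have hsum : ∑ k ∈ Finset.Icc 1 r,
        ((Function.update j (r+1) s k : ℕ) : ℤ) *
          (Msum N L (k+1) - ((Function.update (Function.update j (r+1) s) (r+1+1) t (k+1) : ℕ):ℤ))
      = ∑ k ∈ Finset.Icc 1 r,
        (j k : ℤ) * (Msum N L (k+1) - ((Function.update j (r+1) s (k+1) : ℕ):ℤ)) := by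
    refine Finset.sum_congr rfl fun k hk => ?_
    rw [hval k hk, hjk k hk]
  have hprod : ∏ k ∈ Finset.Icc 1 r,
        qBinom p (L k + ((Function.update (Function.update j (r+1) s) (r+1+1) t (k+1) : ℕ):ℤ))
          ((Function.update j (r+1) s k : ℕ):ℤ)
      = ∏ k ∈ Finset.Icc 1 r,
        qBinom p (L k + ((Function.update j (r+1) s (k+1) : ℕ):ℤ)) ((j k : ℕ):ℤ) := by
    refine Finset.prod_congr rfl fun k hk => ?_
    rw [hval k hk, hjk k hk]
  rw [hsum, hprod]
  have htop1 : Function.update (Function.update j (r+1) s) (r+1+1) t (r+1+1) = t :=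
    Function.update_self _ _ _
  have htop2 : Function.update j (r+1) s (r+1) = s := Function.update_self _ _ _
  rw [htop1, htop2]
  rw [← zpow_helper hp0 (∑ k ∈ Finset.Icc 1 r,
        (j k : ℤ) * (Msum N L (k+1) - ((Function.update j (r+1) s (k+1) : ℕ):ℤ)))
      ((s:ℤ) * (Msum N L (r+1+1) - (t:ℤ))) _ rfl]
  simp only [show r+1+1 = r+2 by omega]
  ring

lemma GG_eq_wgt (hp0 : p ≠ 0) : ∀ (r t m : ℕ),
    GG p N L r t ((m:ℕ):ℤ) = ∑ j ∈ Jset r m, wgt p N L r t j := by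
  intro r
  induction r with
  | zero =>
    intro t m
    rw [GG_zero, Jset_zero]
    by_cases hm : m = 0
    · subst hm
      rw [if_pos rfl, if_pos (by norm_num), Finset.sum_singleton, wgt]
      simp
    · rw [if_neg hm, if_neg (by exact_mod_cast hm), Finset.sum_empty]
  | succ r ih =>
    intro t m
    rw [Jset_sum_split r m (wgt p N L (r+1) t), GG_succ]
    rw [show ((m:ℕ):ℤ).toNat = m from Int.toNat_natCast m]
    refine Finset.sum_congr rfl fun s hs => ?_
    simp only [Finset.mem_range] at hs
    have hcast : ((m:ℕ):ℤ) - (s:ℤ) = ((m - s : ℕ):ℤ) := by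
      push_cast [Nat.cast_sub (by omega : s ≤ m)]; ring
    rw [hcast, ih s (m - s), Finset.mul_sum]
    refine Finset.sum_congr rfl fun j hj => ?_
    obtain ⟨hsup, -⟩ := (mem_Jset _ _ j).mp hj
    rw [wgt_split hp0 r t s j hsup]

lemma supernomial_eq_GG (hp0 : p ≠ 0) (K' : ℕ) (hN : N = K'+1) (a : ℤ) :
    supernomial p N L ((a:ℚ) - (tadInv N L N : ℚ)/2) = GG p N L N 0 a := by
  subst hN
  rw [supernomial]
  rw [show ((a:ℚ) - (tadInv (K'+1) L (K'+1) : ℚ)/2 + (tadInv (K'+1) L (K'+1) : ℚ)/2) = (a:ℚ)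
    from by ring]
  rcases lt_or_ge a 0 with ha|ha
  · haveI : IsEmpty (SuperIndex (K'+1) ((a:ℚ))) := by
      constructor
      rintro ⟨j, hsup, hsum⟩
      have h1 : (0:ℚ) ≤ ((∑ k ∈ Finset.Icc 1 (K'+1), j k : ℕ):ℚ) := by positivity
      rw [hsum] at h1
      have h2 : (0:ℤ) ≤ a := by exact_mod_cast h1
      omega
    rw [tsum_empty, GG_neg (K'+1) 0 ha]
  · obtain ⟨m, rfl⟩ : ∃ m : ℕ, a = (m:ℤ) := ⟨a.toNat, by omega⟩
    rw [show (((m:ℤ):ℚ)) = ((m:ℕ):ℚ) from by push_cast; ring]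
    let e : SuperIndex (K'+1) ((m:ℕ):ℚ) ≃ {x : ℕ → ℕ // x ∈ Jset (K'+1) m} :=
      Equiv.subtypeEquivRight (fun j => by
        rw [mem_Jset]
        constructor
        · rintro ⟨h1, h2⟩
          exact ⟨h1, by exact_mod_cast h2⟩
        · rintro ⟨h1, h2⟩
          exact ⟨h1, by exact_mod_cast congrArg (fun x : ℕ => ((x:ℕ):ℚ)) h2⟩)
    set F : (ℕ → ℕ) → ℂ := fun j =>
      p ^ (∑ k ∈ Finset.Icc 2 (K'+1), (j (k - 1) : ℤ) *
            ((∑ i ∈ Finset.Icc k (K'+1), L i) - (j k : ℤ))) *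
        ∏ k ∈ Finset.Icc 1 (K'+1), qBinom p (L k + (j (k + 1) : ℤ)) (j k) with hF
    have step1 : ∑' (j : SuperIndex (K'+1) ((m:ℕ):ℚ)), F j.1
        = ∑' (x : {x : ℕ → ℕ // x ∈ Jset (K'+1) m}), F x.1 := by
      have h := Equiv.tsum_eq e (fun x => F x.1)
      have h2 : (fun (c : SuperIndex (K'+1) ((m:ℕ):ℚ)) => F ((e c).1)) = fun c => F c.1 := by
        funext c
        rcases c with ⟨c, hc⟩
        rfl
      rw [tsum_congr (fun c => congrFun h2 c)] at h
      exact h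
    have step2 : ∑' (x : {x : ℕ → ℕ // x ∈ Jset (K'+1) m}), F x.1
        = ∑ j ∈ Jset (K'+1) m, F j := Finset.tsum_subtype (Jset (K'+1) m) F
    have step3 : ∑ j ∈ Jset (K'+1) m, F j = ∑ j ∈ Jset (K'+1) m, wgt p (K'+1) L (K'+1) 0 j := by
      refine Finset.sum_congr rfl fun j hj => ?_
      obtain ⟨hsup, -⟩ := (mem_Jset _ _ j).mp hj
      have hupd : Function.update j (K'+1+1) 0 = j := by
        have h := hsup (K'+1+1) (Or.inr (by omega))
        rw [← h]
        exact Function.update_eq_self _ _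
      rw [wgt, hupd]
      simp only [hF]
      have hE : (∑ k ∈ Finset.Icc 2 (K'+1), (j (k - 1) : ℤ) *
            ((∑ i ∈ Finset.Icc k (K'+1), L i) - (j k : ℤ)))
          = ∑ k ∈ Finset.Icc 1 (K'+1), (j k : ℤ) * (Msum (K'+1) L (k+1) - ((j (k+1) : ℕ):ℤ)) := by
        rw [Finset.sum_Icc_succ_top (by omega : 1 ≤ K'+1)]
        have top0 : ((j (K'+1+1) : ℕ):ℤ) = 0 := by rw [hsup (K'+1+1) (Or.inr (by omega))]; rfl
        rw [top0, Msum_empty (by omega : K'+1 < K'+1+1)]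
        rw [show ((j (K'+1):ℕ):ℤ) * ((0:ℤ) - 0) = 0 by ring, add_zero]
        rw [← Finset.map_add_right_Icc 1 K' 1, Finset.sum_map]
        refine Finset.sum_congr rfl fun k hk => ?_
        simp only [addRightEmbedding_apply, Nat.add_sub_cancel, Msum]
      rw [hE]
    exact step1.trans (step2.trans (step3.trans (GG_eq_wgt hp0 (K'+1) 0 m).symm))

lemma sum_min_uvec (i n : ℕ) (s : Finset ℕ) :
    ∑ j ∈ s, (min i j : ℤ) * uvecZ n j = if n ∈ s then (min i n : ℤ) else 0 := by
  rw [← Finset.sum_ite_eq' s n (fun j => (min i j : ℤ))]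
  refine Finset.sum_congr rfl fun j _ => ?_
  simp only [uvecZ]
  split_ifs with h
  · subst h; ring
  · ring

lemma tad_L' (K i : ℕ) :
    tadInv (K+2) (fun j => L j + uvecZ (K+1) j - uvecZ (K+2) j) i
      = tadInv (K+2) L i + (min i (K+1) : ℤ) - (min i (K+2) : ℤ) := by
  rw [tadInv, tadInv]
  have h : ∀ j ∈ Finset.Icc 1 (K+2), (min i j : ℤ) * (L j + uvecZ (K+1) j - uvecZ (K+2) j)
      = (min i j : ℤ) * L j + (min i j : ℤ) * uvecZ (K+1) j - (min i j : ℤ) * uvecZ (K+2) j :=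
    fun j _ => by ring
  rw [Finset.sum_congr rfl h, Finset.sum_sub_distrib, Finset.sum_add_distrib,
    sum_min_uvec, sum_min_uvec,
    if_pos (by simp only [Finset.mem_Icc]; omega), if_pos (by simp only [Finset.mem_Icc]; omega)]
  push_cast; ring

lemma tad_L2 (K i : ℕ) :
    tadInv (K+2) (fun j => L j - 2 * uvecZ (K+2) j) i
      = tadInv (K+2) L i - 2 * (min i (K+2) : ℤ) := by
  rw [tadInv, tadInv]
  have h : ∀ j ∈ Finset.Icc 1 (K+2), (min i j : ℤ) * (L j - 2 * uvecZ (K+2) j)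
      = (min i j : ℤ) * L j - 2 * ((min i j : ℤ) * uvecZ (K+2) j) := fun j _ => by ring
  rw [Finset.sum_congr rfl h, Finset.sum_sub_distrib, ← Finset.mul_sum, sum_min_uvec,
    if_pos (by simp only [Finset.mem_Icc]; omega)]
  push_cast; ring

lemma tad_L3 (K i : ℕ) :
    tadInv (K+2) (fun j => L j + uvecZ (K+1) j - 2 * uvecZ (K+2) j) i
      = tadInv (K+2) L i + (min i (K+1) : ℤ) - 2 * (min i (K+2) : ℤ) := by
  rw [tadInv, tadInv]
  have h : ∀ j ∈ Finset.Icc 1 (K+2), (min i j : ℤ) * (L j + uvecZ (K+1) j - 2 * uvecZ (K+2) j)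
      = (min i j : ℤ) * L j + (min i j : ℤ) * uvecZ (K+1) j - 2 * ((min i j : ℤ) * uvecZ (K+2) j) :=
    fun j _ => by ring
  rw [Finset.sum_congr rfl h, Finset.sum_sub_distrib, Finset.sum_add_distrib, ← Finset.mul_sum,
    sum_min_uvec, sum_min_uvec,
    if_pos (by simp only [Finset.mem_Icc]; omega), if_pos (by simp only [Finset.mem_Icc]; omega)]
  push_cast; ring

lemma tadInv_one (hN : 1 ≤ N) : tadInv N L 1 = ∑ j ∈ Finset.Icc 1 N, L j := by
  rw [tadInv]
  refine Finset.sum_congr rfl fun j hj => ?_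
  simp only [Finset.mem_Icc] at hj
  rw [min_eq_left (by exact_mod_cast hj.1 : ((1:ℕ):ℤ) ≤ (j:ℤ))]
  push_cast; ring

lemma tadInv_diag : tadInv N L N = ∑ j ∈ Finset.Icc 1 N, (j:ℤ) * L j := by
  rw [tadInv]
  refine Finset.sum_congr rfl fun j hj => ?_
  simp only [Finset.mem_Icc] at hj
  rw [min_eq_right (by exact_mod_cast hj.2 : (j:ℤ) ≤ (N:ℤ))]

lemma sum_Msum : ∑ k ∈ Finset.Icc 1 N, Msum N L k = ∑ i ∈ Finset.Icc 1 N, (i:ℤ) * L i := by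
  have h1 : ∀ k ∈ Finset.Icc 1 N, Msum N L k
      = ∑ i ∈ Finset.Icc 1 N, (if k ≤ i then L i else 0) := by
    intro k hk
    simp only [Finset.mem_Icc] at hk
    rw [Msum]
    rw [show Finset.Icc k N = (Finset.Icc 1 N).filter (fun i => k ≤ i) from by
      ext x; simp only [Finset.mem_Icc, Finset.mem_filter]; omega]
    exact Finset.sum_filter (fun i => k ≤ i) L
  rw [Finset.sum_congr rfl h1, Finset.sum_comm]
  refine Finset.sum_congr rfl fun i hi => ?_
  simp only [Finset.mem_Icc] at hi
  rw [← Finset.sum_filter]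
  rw [show (Finset.Icc 1 N).filter (fun k => k ≤ i) = Finset.Icc 1 i from by
    ext x; simp only [Finset.mem_Icc, Finset.mem_filter]; omega]
  rw [Finset.sum_const, Nat.card_Icc]
  simp only [Nat.add_sub_cancel]
  rw [nsmul_eq_mul]
end SupAux
end

open SupAux in
theorem modDualSupernomial_recurrence (N : ℕ) (hN : 2 ≤ N)
    (q : ℂ) (hq0 : q ≠ 0) (hq1 : ∀ m : ℕ, 0 < m → q ^ m ≠ 1)
    (L : ℕ → ℤ) (hL : ∀ i ∈ Finset.Icc 1 N, 0 ≤ L i - 2 * uvecZ N i)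
    (a : ℤ) :
    modDualSupernomial q N L a
      = q ^ (tadInv N L 1) *
          modDualSupernomial q N (fun i => L i + uvecZ (N - 1) i - uvecZ N i) (a - 1)
        + q ^ (2 * a - N + ∑ i ∈ Finset.Icc 1 N, ((N : ℤ) - i) * L i) *
          modDualSupernomial q N (fun i => L i - 2 * uvecZ N i) (a - N)
        + modDualSupernomial q N (fun i => L i + uvecZ (N - 1) i - 2 * uvecZ N i) a := by
  obtain ⟨K, rfl⟩ : ∃ K, N = K + 2 := ⟨N - 2, by omega⟩
  clear hN hL
  have hp0 : q⁻¹ ≠ 0 := inv_ne_zero hq0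
  have hp1 : ∀ m : ℕ, 0 < m → (q⁻¹)^m ≠ 1 := by
    intro m hm h
    apply hq1 m hm
    rw [inv_pow] at h
    exact inv_eq_one.mp h
  simp only [show K+2-1 = K+1 from rfl, modDualSupernomial]
  rw [supernomial_eq_GG hp0 (K+1) rfl a,
      supernomial_eq_GG (L := fun i => L i + uvecZ (K+1) i - uvecZ (K+2) i) hp0 (K+1) rfl (a-1),
      supernomial_eq_GG (L := fun i => L i - 2 * uvecZ (K+2) i) hp0 (K+1) rfl (a-((K+2:ℕ):ℤ)),
      supernomial_eq_GG (L := fun i => L i + uvecZ (K+1) i - 2 * uvecZ (K+2) i) hp0 (K+1) rfl a]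
  simp only [show K+1+1 = K+2 from rfl]
  rw [tad_L' K 1, tad_L2 K 1, tad_L3 K 1,
    show (((1:ℕ):ℤ) ⊓ ((K:ℤ) + 1)) = 1 from by omega,
    show (((1:ℕ):ℤ) ⊓ ((K:ℤ) + 2)) = 1 from by omega]
  rw [GG_rec K hp0 hp1 a]
  have hinv : ∀ e : ℤ, (q⁻¹)^e = q^(-e) := fun e => by rw [inv_zpow, ← zpow_neg]
  rw [hinv (gam K L (K+1) + L (K+2) - 1), hinv a]
  have hgam : gam K L (K+1) + L (K+2) - 1 = tadInv (K+2) L (K+2) - ((K+2:ℕ):ℤ) := by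
    have h1 : (∑ k ∈ Finset.Icc 1 (K+2), Msum (K+2) L k)
        = (∑ k ∈ Finset.Icc 1 (K+1), Msum (K+2) L k) + Msum (K+2) L (K+2) :=
      Finset.sum_Icc_succ_top (by omega) _
    have h2 : (∑ k ∈ Finset.Icc 1 (K+2), Msum (K+2) L k)
        = ∑ i ∈ Finset.Icc 1 (K+2), (i:ℤ) * L i := sum_Msum
    have h3 : tadInv (K+2) L (K+2) = ∑ j ∈ Finset.Icc 1 (K+2), (j:ℤ) * L j := tadInv_diag
    have h4 : Msum (K+2) L (K+2) = L (K+2) := Msum_top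
    rw [gam]
    push_cast
    linear_combination -h1 + h2 - h3 - h4
  have hS : (∑ i ∈ Finset.Icc 1 (K+2), (((K+2:ℕ):ℤ) - (i:ℤ)) * L i)
      = ((K+2:ℕ):ℤ) * tadInv (K+2) L 1 - tadInv (K+2) L (K+2) := by
    rw [tadInv_one (show 1 ≤ K+2 by omega), tadInv_diag, Finset.mul_sum,
      ← Finset.sum_sub_distrib]
    exact Finset.sum_congr rfl fun i _ => by ring
  have e1 : q^(tadInv (K+2) L 1) * q^((a-1)*(tadInv (K+2) L 1 + 1 - 1)) = q^(a*tadInv (K+2) L 1) :=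
    zpow_helper hq0 _ _ _ (by ring)
  have e2 : q^(2*a - ((K+2:ℕ):ℤ) + ∑ i ∈ Finset.Icc 1 (K+2), (((K+2:ℕ):ℤ) - (i:ℤ)) * L i)
        * q^((a-((K+2:ℕ):ℤ))*(tadInv (K+2) L 1 - 2*1))
      = q^(a*tadInv (K+2) L 1) * q^(-(gam K L (K+1) + L (K+2) - 1)) := by
    rw [zpow_helper hq0 _ _ _ rfl, zpow_helper hq0 _ _ _ rfl]
    congr 1
    linear_combination hS + hgam
  have e3 : q^(a*(tadInv (K+2) L 1 + 1 - 2*1)) = q^(a*tadInv (K+2) L 1) * q^(-a) := by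
    rw [zpow_helper hq0 _ _ _ rfl]
    congr 1
    ring
  linear_combination
    (-(SupAux.GG q⁻¹ (K+2) (fun i => L i + uvecZ (K+1) i - uvecZ (K+2) i) (K+2) 0 (a-1))) * e1
    + (-(SupAux.GG q⁻¹ (K+2) (fun i => L i - 2 * uvecZ (K+2) i) (K+2) 0 (a - ((K+2:ℕ):ℤ)))) * e2
    + (-(SupAux.GG q⁻¹ (K+2) (fun i => L i + uvecZ (K+1) i - 2 * uvecZ (K+2) i) (K+2) 0 a)) * e3
end
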